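/- arXiv:2601.21395 — 4 statements merged into one kernel-verified Lean document; each statement's English description precedes it below -/
import Mathlib

section
/- Let n ≥ 2 and ℓ be integers with 0 ≤ ℓ ≤ n−1. Then the ℓ-fold finite q-multiple harmonic sum with all exponents equal to −2 satisfies 𝔷_n(−2,…,−2) (ℓ entries) = Σ_{1 ≤ i_1 < ⋯ < i_ℓ ≤ n−1} ∏_{j=1}^{ℓ} (1 − ζ_n^{i_j})^2 = C(n, ℓ) + 2·(−1)^{n−ℓ−1}·C(n, 2n−2ℓ). -/
open Finset

/-- The primitive n-th root of unity ζ_n = exp(2πi/n). -/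
noncomputable def zetaN (n : ℕ) : ℂ := Complex.exp (2 * Real.pi * Complex.I / n)

/-- The finite q-multiple harmonic sum 𝔷_n(s_1,…,s_m) for a list of integer exponents:
the sum over 1 ≤ i_1 < ⋯ < i_m ≤ n-1 of ∏_j (1 - ζ_n^{i_j})^{-s_j}. -/
noncomputable def qhs (n : ℕ) (s : List ℤ) : ℂ :=
  ∑ t ∈ (Finset.Icc 1 (n - 1)).powersetCard s.length,
    (List.zipWith (fun i e => (1 - zetaN n ^ i) ^ (-e)) (t.sort (· ≤ ·)) s).prod

/-- Sum of 𝔷_n(σ) over all distinct rearrangements σ of the list L of exponents. -/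
noncomputable def Yperm (n : ℕ) (L : List ℤ) : ℂ :=
  ∑ σ ∈ L.permutations.toFinset, qhs n σ

/-- 𝒴_n(3^a, 2^b, 1^c): the sum of 𝔷_n(σ) over all distinct rearrangements of a string of
a threes, b twos and c ones; interpreted as 0 if some block length is negative. -/
noncomputable def Y3 (n : ℕ) (a b c : ℤ) : ℂ :=
  if 0 ≤ a ∧ 0 ≤ b ∧ 0 ≤ c then
    Yperm n (List.replicate a.toNat 3 ++ List.replicate b.toNat 2 ++ List.replicate c.toNat 1)
  else 0

/-- Binomial coefficient C(a,b) for integers, interpreted as 0 when b < 0 or b > a. -/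
def ichoose (a b : ℤ) : ℤ :=
  if 0 ≤ b ∧ b ≤ a then (a.toNat).choose b.toNat else 0

open Polynomial

lemma neg_one_sq_pow (m : ℕ) : (-1 : ℂ) ^ m * (-1) ^ m = 1 := by
  rw [← pow_add, ← two_mul, pow_mul]; norm_num

lemma zetaN_prim (n : ℕ) (hn : 0 < n) : IsPrimitiveRoot (zetaN n) n :=
  Complex.isPrimitiveRoot_exp n hn.ne'

lemma prod_range_roots (n : ℕ) (hn : 0 < n) (y : ℂ) :
    ∏ i ∈ Finset.range n, (y - zetaN n ^ i) = y ^ n - 1 := by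
  have hprim := zetaN_prim n hn
  have hinj : Set.InjOn (zetaN n ^ ·) (Finset.range n) :=
    fun i hi j hj h => hprim.pow_inj (Finset.mem_range.mp hi) (Finset.mem_range.mp hj) h
  have himg : (Finset.range n).image (zetaN n ^ ·) = nthRootsFinset n (1 : ℂ) := by
    apply Finset.eq_of_subset_of_card_le
    · intro x hx
      simp only [Finset.mem_image, Finset.mem_range] at hx
      obtain ⟨i, hi, rfl⟩ := hx
      rw [mem_nthRootsFinset hn, ← pow_mul, mul_comm, pow_mul, hprim.pow_eq_one, one_pow]
    · rw [hprim.card_nthRootsFinset, Finset.card_image_of_injOn hinj, Finset.card_range]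
  have h2 := congrArg (Polynomial.eval y) (X_pow_sub_one_eq_prod hn hprim)
  simp only [eval_sub, eval_pow, eval_X, eval_one, eval_prod, eval_sub, eval_C] at h2
  rw [h2, ← himg, Finset.prod_image hinj]

lemma prod_Icc_roots (n : ℕ) (hn : 2 ≤ n) (y : ℂ) :
    (y - 1) * ∏ i ∈ Finset.Icc 1 (n - 1), (y - zetaN n ^ i) = y ^ n - 1 := by
  have h0 : Finset.range n = insert 0 (Finset.Icc 1 (n - 1)) := by
    ext i
    simp only [Finset.mem_range, Finset.mem_insert, Finset.mem_Icc]
    omega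
  rw [← prod_range_roots n (by omega) y, h0,
    Finset.prod_insert (by simp [Finset.mem_Icc]), pow_zero]

lemma zipWith_rep (n : ℕ) (c : ℤ) (l : List ℕ) :
    List.zipWith (fun i e => (1 - zetaN n ^ i) ^ (-e)) l (List.replicate l.length c)
      = l.map (fun i => (1 - zetaN n ^ i) ^ (-c)) := by
  induction l with
  | nil => rfl
  | cons a l ih =>
      simp only [List.length_cons, List.replicate_succ, List.zipWith_cons_cons, List.map_cons, ih]

theorem stmt1 (n ℓ : ℕ) (hn : 2 ≤ n) (hℓ : ℓ ≤ n - 1) :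
    qhs n (List.replicate ℓ (-2))
      = (n.choose ℓ : ℂ) + 2 * (-1 : ℂ) ^ (n - ℓ - 1) * (n.choose (2 * n - 2 * ℓ) : ℂ) := by
  set s : Finset ℕ := Finset.Icc 1 (n - 1) with hs
  have hscard : s.card = n - 1 := by rw [hs, Nat.card_Icc]; omega
  set f : ℕ → ℂ := fun i => 1 - zetaN n ^ i with hf
  set T : ℂ := ∑ t ∈ s.powersetCard ℓ, ∏ i ∈ t, f i ^ 2 with hT
  -- Step A : reduce qhs to a plain sum of products of squares
  have hA : qhs n (List.replicate ℓ (-2)) = T := by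
    rw [qhs, List.length_replicate, hT]
    apply Finset.sum_congr rfl
    intro t ht
    have hc : t.card = ℓ := (Finset.mem_powersetCard.mp ht).2
    have hlen : (t.sort (· ≤ ·)).length = ℓ := by rw [Finset.length_sort, hc]
    rw [← hlen, zipWith_rep]
    have hz : ∀ i : ℕ, (1 - zetaN n ^ i) ^ (-(-2 : ℤ)) = f i ^ 2 := by
      intro i
      rw [hf, neg_neg, show ((2:ℤ)) = ((2:ℕ):ℤ) from rfl, zpow_natCast]
    simp only [hz]
    rw [Finset.prod_eq_multiset_prod, ← Finset.sort_eq (s := t) (r := (· ≤ ·)), Multiset.map_coe,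
      Multiset.prod_coe]
  -- The key polynomial
  set P : ℂ[X] := ∏ i ∈ s, (X + C (-(f i ^ 2))) with hP
  -- Vieta
  have hm : n - 1 - ℓ ≤ s.card := by omega
  have hC : P.coeff (n - 1 - ℓ) = (-1 : ℂ) ^ ℓ * T := by
    rw [hP, Finset.prod_X_add_C_coeff s _ hm, hT, Finset.mul_sum]
    have hsub : s.card - (n - 1 - ℓ) = ℓ := by omega
    rw [hsub]
    apply Finset.sum_congr rfl
    intro t ht
    have hc : t.card = ℓ := (Finset.mem_powersetCard.mp ht).2
    rw [← hc, ← Finset.prod_const, ← Finset.prod_mul_distrib]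
    apply Finset.prod_congr rfl
    intro i _
    ring
  -- Polynomial identity
  have hkey : X ^ 2 * P.comp (X ^ 2)
      = ((X - 1) ^ n - C ((-1 : ℂ) ^ n)) * ((X + 1) ^ n - 1) := by
    apply Polynomial.funext
    intro x
    simp only [eval_mul, eval_pow, eval_X, eval_comp, hP, eval_prod, eval_add, eval_C,
      eval_sub, eval_one, eval_neg]
    have hfac : ∀ i ∈ s, x ^ 2 + -(f i ^ 2) = (x - f i) * (x + f i) := fun i _ => by ring
    rw [Finset.prod_congr rfl hfac, Finset.prod_mul_distrib]
    have h1 : x * ∏ i ∈ s, (x - f i) = (x - 1) ^ n - (-1 : ℂ) ^ n := by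
      have e1 := prod_Icc_roots n hn (1 - x)
      have e2 : ∏ i ∈ s, ((1 - x) - zetaN n ^ i) = (-1 : ℂ) ^ (n - 1) * ∏ i ∈ s, (x - f i) := by
        rw [← hscard, ← Finset.prod_const, ← Finset.prod_mul_distrib]
        apply Finset.prod_congr rfl
        intro i _
        rw [hf]; ring
      rw [e2] at e1
      have hpow : (1 - x - 1) * ((-1 : ℂ) ^ (n - 1) * ∏ i ∈ s, (x - f i))
          = (-1 : ℂ) ^ n * (x * ∏ i ∈ s, (x - f i)) := by
        have h1n : (-1 : ℂ) * (-1) ^ (n - 1) = (-1) ^ n := by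
          rw [← pow_succ']
          congr 1
          omega
        rw [← h1n]; ring
      rw [hpow] at e1
      calc x * ∏ i ∈ s, (x - f i)
          = (-1 : ℂ) ^ n * ((-1 : ℂ) ^ n * (x * ∏ i ∈ s, (x - f i))) := by
            rw [← mul_assoc, neg_one_sq_pow, one_mul]
        _ = (-1 : ℂ) ^ n * ((1 - x) ^ n - 1) := by rw [e1]
        _ = ((-1 : ℂ) * (1 - x)) ^ n - (-1 : ℂ) ^ n := by rw [mul_pow, mul_sub, mul_one]
        _ = (x - 1) ^ n - (-1 : ℂ) ^ n := by ring_nf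
    have h2 : x * ∏ i ∈ s, (x + f i) = (x + 1) ^ n - 1 := by
      have e1 := prod_Icc_roots n hn (x + 1)
      have e2 : ∏ i ∈ s, ((x + 1) - zetaN n ^ i) = ∏ i ∈ s, (x + f i) :=
        Finset.prod_congr rfl (fun i _ => by rw [hf]; ring)
      rw [e2, add_sub_cancel_right] at e1
      exact e1
    calc x ^ 2 * ((∏ i ∈ s, (x - f i)) * ∏ i ∈ s, (x + f i))
        = (x * ∏ i ∈ s, (x - f i)) * (x * ∏ i ∈ s, (x + f i)) := by ring
      _ = ((x - 1) ^ n - (-1 : ℂ) ^ n) * ((x + 1) ^ n - 1) := by rw [h1, h2]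
  -- Coefficient extraction
  have hD : P.coeff (n - 1 - ℓ)
      = (((X - 1) ^ n - C ((-1 : ℂ) ^ n)) * ((X + 1) ^ n - 1)).coeff (2 * n - 2 * ℓ) := by
    rw [← hkey, show 2 * n - 2 * ℓ = 2 * (n - 1 - ℓ) + 2 by omega, coeff_X_pow_mul,
      ← expand_eq_comp_X_pow, coeff_expand_mul' (by norm_num : 0 < 2)]
  -- expand the product
  have hAB : ((X - 1) ^ n - C ((-1 : ℂ) ^ n)) * ((X + 1) ^ n - 1)
      = ((X ^ 2 - 1 : ℂ[X]) ^ n - (X - 1) ^ n - C ((-1 : ℂ) ^ n) * (X + 1) ^ n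
          + C ((-1 : ℂ) ^ n)) := by
    have hstep : ((X - 1) ^ n - C ((-1 : ℂ) ^ n)) * ((X + 1) ^ n - 1)
        = ((X - 1 : ℂ[X]) ^ n * (X + 1) ^ n - (X - 1) ^ n - C ((-1 : ℂ) ^ n) * (X + 1) ^ n
            + C ((-1 : ℂ) ^ n)) := by ring
    rw [hstep, ← mul_pow, show ((X - 1 : ℂ[X]) * (X + 1)) = X ^ 2 - 1 from by ring]
  set k : ℕ := 2 * n - 2 * ℓ with hk
  have hk2 : 2 ≤ k := by omega
  have hXm1 : ∀ j : ℕ, (((X - 1 : ℂ[X])) ^ n).coeff j = (-1 : ℂ) ^ (n - j) * (n.choose j : ℂ) := by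
    intro j
    rw [show (X - 1 : ℂ[X]) = X + C (-1) from by rw [C_neg, C_1]; ring, coeff_X_add_C_pow]
  have c1 : ((X ^ 2 - 1 : ℂ[X]) ^ n).coeff k = (-1 : ℂ) ^ ℓ * (n.choose ℓ : ℂ) := by
    have hex : ((X ^ 2 - 1 : ℂ[X]) ^ n) = expand ℂ 2 ((X - 1) ^ n) := by
      rw [map_pow, map_sub, expand_X, map_one]
    rw [hex, hk, show 2 * n - 2 * ℓ = 2 * (n - ℓ) by omega,
      coeff_expand_mul' (by norm_num : 0 < 2), hXm1,
      show n - (n - ℓ) = ℓ by omega, Nat.choose_symm (by omega : ℓ ≤ n)]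
  have c2 : (((X - 1 : ℂ[X])) ^ n).coeff k = (-1 : ℂ) ^ n * (n.choose k : ℂ) := by
    rw [hXm1]
    rcases le_or_gt k n with h | h
    · have hkev : (-1 : ℂ) ^ k = 1 := by
        rw [hk, show 2 * n - 2 * ℓ = 2 * (n - ℓ) by omega, pow_mul]; norm_num
      have hnk : (-1 : ℂ) ^ (n - k) = (-1 : ℂ) ^ n :=
        calc (-1 : ℂ) ^ (n - k) = (-1 : ℂ) ^ (n - k) * (-1 : ℂ) ^ k := by rw [hkev, mul_one]
          _ = (-1 : ℂ) ^ (n - k + k) := (pow_add _ _ _).symm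
          _ = (-1 : ℂ) ^ n := by rw [Nat.sub_add_cancel h]
      rw [hnk]
    · rw [Nat.choose_eq_zero_of_lt h]; simp
  have c3 : ((C ((-1 : ℂ) ^ n)) * (X + 1) ^ n).coeff k = (-1 : ℂ) ^ n * (n.choose k : ℂ) := by
    rw [coeff_C_mul, coeff_X_add_one_pow]
  have c4 : (C ((-1 : ℂ) ^ n) : ℂ[X]).coeff k = 0 := by
    rw [coeff_C, if_neg (by omega)]
  have hPc : P.coeff (n - 1 - ℓ)
      = (-1 : ℂ) ^ ℓ * (n.choose ℓ : ℂ) - 2 * (-1 : ℂ) ^ n * (n.choose k : ℂ) := by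
    rw [hD, hAB, coeff_add, coeff_sub, coeff_sub, c1, c2, c3, c4]
    ring
  -- Conclude
  have hfin : T = (n.choose ℓ : ℂ) - 2 * ((-1 : ℂ) ^ n * (-1 : ℂ) ^ ℓ) * (n.choose k : ℂ) := by
    have := hC.symm.trans hPc
    calc T = (-1 : ℂ) ^ ℓ * ((-1 : ℂ) ^ ℓ * T) := by
            rw [← mul_assoc, neg_one_sq_pow, one_mul]
      _ = (-1 : ℂ) ^ ℓ * ((-1 : ℂ) ^ ℓ * (n.choose ℓ : ℂ)
            - 2 * (-1 : ℂ) ^ n * (n.choose k : ℂ)) := by rw [this]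
      _ = ((-1 : ℂ) ^ ℓ * (-1 : ℂ) ^ ℓ) * (n.choose ℓ : ℂ)
            - 2 * ((-1 : ℂ) ^ n * (-1 : ℂ) ^ ℓ) * (n.choose k : ℂ) := by ring
      _ = (n.choose ℓ : ℂ) - 2 * ((-1 : ℂ) ^ n * (-1 : ℂ) ^ ℓ) * (n.choose k : ℂ) := by
            rw [neg_one_sq_pow, one_mul]
  have hsign : (-1 : ℂ) ^ (n - ℓ - 1) = -((-1 : ℂ) ^ n * (-1 : ℂ) ^ ℓ) := by
    have h1 : (-1 : ℂ) ^ (n - ℓ - 1) * (-1 : ℂ) ^ (ℓ + 1) = (-1 : ℂ) ^ n := by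
      rw [← pow_add]
      congr 1
      omega
    calc (-1 : ℂ) ^ (n - ℓ - 1)
        = (-1 : ℂ) ^ (n - ℓ - 1) * ((-1 : ℂ) ^ (ℓ + 1) * (-1 : ℂ) ^ (ℓ + 1)) := by
          rw [neg_one_sq_pow, mul_one]
      _ = ((-1 : ℂ) ^ (n - ℓ - 1) * (-1 : ℂ) ^ (ℓ + 1)) * (-1 : ℂ) ^ (ℓ + 1) := by ring
      _ = (-1 : ℂ) ^ n * (-1 : ℂ) ^ (ℓ + 1) := by rw [h1]
      _ = -((-1 : ℂ) ^ n * (-1 : ℂ) ^ ℓ) := by rw [pow_succ]; ring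
  rw [hA, hfin, hsign]
  ring
end

section
/- Let n, m, ℓ be integers with n−1 ≥ m ≥ ℓ ≥ 0 and n ≥ 2. Then Σ_{j=0}^{n−m−2} C(n−m+ℓ−3−2j, ℓ−1−j) · 𝒴_n(2^{m−ℓ+1+j}, 1^{n−m+ℓ−3−2j}) = (1/(n(m+1))) · C(n−1, m) · ( C(n, ℓ) − C(m+1, ℓ) ). -/
open Finset

section Aux
open Polynomial
variable {n : ℕ}


lemma prod_range_zeta {ζ : ℂ} (hζ : IsPrimitiveRoot ζ n) (hn : 2 ≤ n) :
    ∏ i ∈ Finset.range n, ((X : ℂ[X]) - C (ζ ^ i)) = X ^ n - 1 := by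
  have h0 : (n : ℕ) ≠ 0 := by omega
  have hroots : nthRoots n (1 : ℂ) = (Multiset.range n).map (fun i => ζ ^ i * 1) :=
    hζ.nthRoots_eq (one_pow n)
  have hr : (X ^ n - C (1:ℂ)).roots = nthRoots n (1:ℂ) := rfl
  have hmonic : (X ^ n - C (1 : ℂ)).Monic := monic_X_pow_sub_C (1 : ℂ) h0
  have hcard : Multiset.card (X ^ n - C (1:ℂ)).roots = (X ^ n - C (1:ℂ)).natDegree := by
    rw [hr, hroots, natDegree_X_pow_sub_C, Multiset.card_map, Multiset.card_range]
  have := prod_multiset_X_sub_C_of_monic_of_roots_card_eq hmonic hcard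
  rw [hr, hroots, Multiset.map_map] at this
  calc ∏ i ∈ Finset.range n, ((X : ℂ[X]) - C (ζ ^ i))
      = ((Multiset.range n).map fun i => X - C (ζ ^ i * 1)).prod := by
        rw [Finset.prod]; simp [Finset.range_val]
    _ = X ^ n - 1 := by rw [show ((fun i => X - C (ζ ^ i * 1)) : ℕ → ℂ[X]) = ((fun a => X - C a) ∘ fun i => ζ ^ i * 1) from rfl, this]; simp

lemma prod_Icc_zeta {ζ : ℂ} (hζ : IsPrimitiveRoot ζ n) (hn : 2 ≤ n) :
    ∏ i ∈ Finset.Icc 1 (n-1), ((X : ℂ[X]) - C (ζ ^ i)) = ∑ k ∈ Finset.range n, X ^ k := by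
  have hins : (Finset.range n) = insert 0 (Finset.Icc 1 (n-1)) := by
    ext i; simp only [Finset.mem_range, Finset.mem_insert, Finset.mem_Icc]; constructor <;> intro h <;> omega
  have h0 : (0:ℕ) ∉ Finset.Icc 1 (n-1) := by simp
  have h1 : ((X : ℂ[X]) - 1) * ∏ i ∈ Finset.Icc 1 (n-1), ((X : ℂ[X]) - C (ζ ^ i))
      = X ^ n - 1 := by
    rw [← prod_range_zeta hζ hn, hins, Finset.prod_insert h0]; simp
  have h2 : ((X : ℂ[X]) - 1) * ∑ k ∈ Finset.range n, X ^ k = X ^ n - 1 := by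
    have := geom_sum_mul (X : ℂ[X]) n
    linear_combination this
  have hne : ((X : ℂ[X]) - 1) ≠ 0 := by
    intro h
    have := congrArg (fun p => Polynomial.eval 2 p) h
    norm_num at this
  exact mul_left_cancel₀ hne (h1.trans h2.symm)

lemma prod_Icc_shift {ζ : ℂ} (hζ : IsPrimitiveRoot ζ n) (hn : 2 ≤ n) :
    ∏ i ∈ Finset.Icc 1 (n-1), ((X : ℂ[X]) + C (1 - ζ ^ i))
      = ∑ k ∈ Finset.range n, (X + 1) ^ k := by
  have := congrArg (fun p => p.comp ((X : ℂ[X]) + 1)) (prod_Icc_zeta hζ hn)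
  simp only [Polynomial.prod_comp, Polynomial.sum_comp, sub_comp, add_comp, X_comp, C_comp,
    pow_comp] at this
  rw [← this]
  exact Finset.prod_congr rfl fun i _ => by rw [map_sub, map_one]; ring

lemma sum_range_choose' (N k : ℕ) : ∑ j ∈ Finset.range N, j.choose k = N.choose (k+1) := by
  induction N with
  | zero => simp
  | succ N ih => rw [Finset.sum_range_succ, ih, Nat.choose_succ_succ N k, Nat.add_comm]

lemma card_Icc_n (hn : 2 ≤ n) : (Finset.Icc 1 (n-1)).card = n - 1 := by
  rw [Nat.card_Icc]; omega

lemma esymm_y {ζ : ℂ} (hζ : IsPrimitiveRoot ζ n) (hn : 2 ≤ n) (k : ℕ) (hk : k ≤ n-1) :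
    ∑ A ∈ (Finset.Icc 1 (n-1)).powersetCard (n-1-k), ∏ i ∈ A, (1 - ζ ^ i)
      = (n.choose (k+1) : ℂ) := by
  have hcard := card_Icc_n (n := n) hn
  have hcoeff := Finset.prod_X_add_C_coeff (Finset.Icc 1 (n-1)) (fun i => 1 - ζ ^ i)
    (k := k) (by rw [hcard]; exact hk)
  rw [hcard] at hcoeff
  rw [← hcoeff, prod_Icc_shift hζ hn]
  rw [finset_sum_coeff]
  rw [Finset.sum_congr rfl (fun j _ => coeff_X_add_one_pow ℂ j k)]
  rw [← Nat.cast_sum, sum_range_choose']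

lemma prod_y_eq_n {ζ : ℂ} (hζ : IsPrimitiveRoot ζ n) (hn : 2 ≤ n) :
    ∏ i ∈ Finset.Icc 1 (n-1), (1 - ζ ^ i) = (n : ℂ) := by
  have := esymm_y hζ hn 0 (by omega)
  have hps : (Finset.Icc 1 (n-1)).powersetCard (n-1-0) = {Finset.Icc 1 (n-1)} := by
    have h2 := Finset.powersetCard_self (Finset.Icc 1 (n-1))
    rw [card_Icc_n (n := n) hn] at h2
    rw [Nat.sub_zero]; exact h2
  rw [hps, Finset.sum_singleton] at this
  simpa using this

lemma y_ne_zero {ζ : ℂ} (hζ : IsPrimitiveRoot ζ n) (hn : 2 ≤ n) {i : ℕ}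
    (hi : i ∈ Finset.Icc 1 (n-1)) : (1 : ℂ) - ζ ^ i ≠ 0 := by
  simp only [Finset.mem_Icc] at hi
  have := hζ.pow_ne_one_of_pos_of_lt (l := i) (by omega) (by omega)
  intro h
  exact this (by linear_combination -h)

lemma esymm_x {ζ : ℂ} (hζ : IsPrimitiveRoot ζ n) (hn : 2 ≤ n) (k : ℕ) (hk : k ≤ n-1) :
    ∑ A ∈ (Finset.Icc 1 (n-1)).powersetCard k, ∏ i ∈ A, ((1:ℂ) - ζ ^ i)⁻¹
      = (n.choose (k+1) : ℂ) / n := by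
  have hI := card_Icc_n (n := n) hn
  have key : ∀ A ∈ (Finset.Icc 1 (n-1)).powersetCard k,
      ∏ i ∈ A, ((1:ℂ) - ζ ^ i)⁻¹ = (∏ i ∈ (Finset.Icc 1 (n-1)) \ A, (1 - ζ ^ i)) / n := by
    intro A hA
    rw [Finset.mem_powersetCard] at hA
    have hprod : (∏ i ∈ (Finset.Icc 1 (n-1)) \ A, ((1:ℂ) - ζ ^ i)) * ∏ i ∈ A, (1 - ζ ^ i)
        = (n : ℂ) := by rw [Finset.prod_sdiff hA.1, prod_y_eq_n hζ hn]
    have hAne : (∏ i ∈ A, ((1:ℂ) - ζ ^ i)) ≠ 0 :=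
      Finset.prod_ne_zero_iff.2 fun i hi => y_ne_zero hζ hn (hA.1 hi)
    have hn0 : (n:ℂ) ≠ 0 := by
      simpa using Nat.cast_ne_zero (R := ℂ).2 (by omega : n ≠ 0)
    rw [Finset.prod_inv_distrib, eq_div_iff hn0, inv_mul_eq_iff_eq_mul₀ hAne]
    exact ((mul_comm _ _).trans hprod).symm
  rw [Finset.sum_congr rfl key]
  rw [← Finset.sum_div]
  congr 1
  -- reindex by complement
  rw [← esymm_y hζ hn k hk]
  apply Finset.sum_nbij' (fun A => (Finset.Icc 1 (n-1)) \ A) (fun B => (Finset.Icc 1 (n-1)) \ B)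
  · intro A hA
    rw [Finset.mem_powersetCard] at hA ⊢
    exact ⟨Finset.sdiff_subset, by rw [Finset.card_sdiff_of_subset hA.1, hI, hA.2]⟩
  · intro B hB
    rw [Finset.mem_powersetCard] at hB ⊢
    refine ⟨Finset.sdiff_subset, by rw [Finset.card_sdiff_of_subset hB.1, hI, hB.2]; omega⟩
  · intro A hA
    rw [Finset.mem_powersetCard] at hA
    exact Finset.sdiff_sdiff_eq_self hA.1
  · intro B hB
    rw [Finset.mem_powersetCard] at hB
    exact Finset.sdiff_sdiff_eq_self hB.1
  · intro A hA; rfl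

lemma e_mul_e (x : ℕ → ℂ) (s : Finset ℕ) (p q : ℕ) :
    (∑ A ∈ s.powersetCard p, ∏ i ∈ A, x i) * (∑ B ∈ s.powersetCard q, ∏ i ∈ B, x i)
    = ∑ b ∈ Finset.range (min p q + 1), ∑ t ∈ s.powersetCard (p+q-b),
        ∑ u ∈ t.powersetCard b, ∑ S ∈ (t \ u).powersetCard (p-b),
          (∏ i ∈ t, x i) * ∏ i ∈ u, x i := by
  classical
  rw [Finset.sum_mul_sum, ← Finset.sum_product']
  have hR : (∑ b ∈ Finset.range (min p q + 1), ∑ t ∈ s.powersetCard (p+q-b),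
        ∑ u ∈ t.powersetCard b, ∑ S ∈ (t \ u).powersetCard (p-b),
          (∏ i ∈ t, x i) * ∏ i ∈ u, x i)
      = ∑ z ∈ (Finset.range (min p q + 1)).sigma (fun b =>
            (s.powersetCard (p+q-b)).sigma (fun t =>
              (t.powersetCard b).sigma (fun u => (t \ u).powersetCard (p-b)))),
          (∏ i ∈ z.2.1, x i) * ∏ i ∈ z.2.2.1, x i := by
    rw [Finset.sum_sigma]
    refine Finset.sum_congr rfl fun b _ => ?_
    rw [Finset.sum_sigma]
    refine Finset.sum_congr rfl fun t _ => ?_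
    rw [Finset.sum_sigma]
  rw [hR]
  refine Finset.sum_nbij' (i := fun P => ⟨(P.1 ∩ P.2).card, P.1 ∪ P.2, P.1 ∩ P.2, P.1 \ P.2⟩)
    (j := fun z => (z.2.2.1 ∪ z.2.2.2, z.2.2.1 ∪ ((z.2.1 \ z.2.2.1) \ z.2.2.2)))
    ?_ ?_ ?_ ?_ ?_
  · rintro ⟨A, B⟩ hP
    rw [Finset.mem_product, Finset.mem_powersetCard, Finset.mem_powersetCard] at hP
    obtain ⟨⟨hAs, hAc⟩, hBs, hBc⟩ := hP
    have h1 : (A ∩ B).card ≤ p := hAc ▸ Finset.card_le_card Finset.inter_subset_left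
    have h2 : (A ∩ B).card ≤ q := hBc ▸ Finset.card_le_card Finset.inter_subset_right
    have h3 : (A ∪ B).card + (A ∩ B).card = p + q := by
      rw [Finset.card_union_add_card_inter, hAc, hBc]
    have h4 : (A \ B).card + (A ∩ B).card = p := by
      rw [Finset.card_sdiff_add_card_inter, hAc]
    simp only [Finset.mem_sigma, Finset.mem_range, Finset.mem_powersetCard]
    refine ⟨by omega, ⟨Finset.union_subset hAs hBs, by omega⟩,
      ⟨fun a ha => Finset.mem_union_left _ (Finset.mem_of_mem_inter_left ha), trivial⟩,
      ?_, by omega⟩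
    intro a ha
    simp only [Finset.mem_sdiff, Finset.mem_union, Finset.mem_inter] at *
    tauto
  · rintro ⟨b, t, u, S⟩ hz
    simp only [Finset.mem_sigma, Finset.mem_range, Finset.mem_powersetCard] at hz
    obtain ⟨hb, ⟨hts, htc⟩, ⟨hut, huc⟩, hSt, hSc⟩ := hz
    have hbp : b ≤ p := by omega
    have hbq : b ≤ q := by omega
    have hdisj1 : Disjoint u S := by
      rw [Finset.disjoint_left]
      intro a hau haS
      exact (Finset.mem_sdiff.1 (hSt haS)).2 hau
    have hdisj2 : Disjoint u ((t \ u) \ S) := by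
      rw [Finset.disjoint_left]
      intro a hau haT
      exact (Finset.mem_sdiff.1 (Finset.mem_sdiff.1 haT).1).2 hau
    have hcS : ((t \ u) \ S).card = q - b := by
      rw [Finset.card_sdiff_of_subset hSt, Finset.card_sdiff_of_subset hut, htc, huc, hSc]
      omega
    rw [Finset.mem_product, Finset.mem_powersetCard, Finset.mem_powersetCard]
    refine ⟨⟨?_, ?_⟩, ?_, ?_⟩
    · exact Finset.union_subset (fun a ha => hts (hut ha))
        (fun a ha => hts (Finset.mem_sdiff.1 (hSt ha)).1)
    · rw [Finset.card_union_of_disjoint hdisj1, huc, hSc]; omega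
    · exact Finset.union_subset (fun a ha => hts (hut ha))
        (fun a ha => hts (Finset.mem_sdiff.1 (Finset.mem_sdiff.1 ha).1).1)
    · rw [Finset.card_union_of_disjoint hdisj2, huc, hcS]; omega
  · rintro ⟨A, B⟩ hP
    have e1 : (A ∩ B) ∪ (A \ B) = A := by
      ext a; simp only [Finset.mem_union, Finset.mem_inter, Finset.mem_sdiff]; tauto
    have e2 : (A ∩ B) ∪ (((A ∪ B) \ (A ∩ B)) \ (A \ B)) = B := by
      ext a
      simp only [Finset.mem_union, Finset.mem_inter, Finset.mem_sdiff]
      tauto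
    simp only [Prod.mk.injEq]
    exact ⟨e1, e2⟩
  · rintro ⟨b, t, u, S⟩ hz
    simp only [Finset.mem_sigma, Finset.mem_range, Finset.mem_powersetCard] at hz
    obtain ⟨hb, ⟨hts, htc⟩, ⟨hut, huc⟩, hSt, hSc⟩ := hz
    have hS' : ∀ a ∈ S, a ∈ t ∧ a ∉ u := by
      intro a ha; have := hSt ha; simpa [Finset.mem_sdiff] using this
    have hu' : ∀ a ∈ u, a ∈ t := fun a ha => hut ha
    have h1 : (u ∪ S) ∩ (u ∪ ((t \ u) \ S)) = u := by
      ext a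
      simp only [Finset.mem_inter, Finset.mem_union, Finset.mem_sdiff]
      constructor
      · rintro ⟨h | h, h' | h'⟩ <;> first | exact h | exact h' | (exact absurd (hS' a h).2 (by tauto)) | tauto
      · intro h; exact ⟨Or.inl h, Or.inl h⟩
    have h2 : (u ∪ S) ∪ (u ∪ ((t \ u) \ S)) = t := by
      ext a
      simp only [Finset.mem_union, Finset.mem_sdiff]
      constructor
      · rintro ((h | h) | (h | h))
        · exact hu' a h
        · exact (hS' a h).1
        · exact hu' a h
        · exact h.1.1
      · intro h
        by_cases hau : a ∈ u
        · exact Or.inl (Or.inl hau)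
        · by_cases haS : a ∈ S
          · exact Or.inl (Or.inr haS)
          · exact Or.inr (Or.inr ⟨⟨h, hau⟩, haS⟩)
    have h3 : (u ∪ S) \ (u ∪ ((t \ u) \ S)) = S := by
      ext a
      have ha := hS' a
      simp only [Finset.mem_union, Finset.mem_sdiff]
      tauto
    dsimp only
    rw [h1, h2, h3, huc]
  · rintro ⟨A, B⟩ hP
    exact (Finset.prod_union_inter).symm

lemma zipWith_replicate_prod (f : ℕ → ℤ → ℂ) (e : ℤ) :
    ∀ (l : List ℕ), l.Nodup →
      (List.zipWith (fun i e' => f i e') l (List.replicate l.length e)).prod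
        = ∏ i ∈ l.toFinset, f i e := by
  intro l
  induction l with
  | nil => simp
  | cons a l ih =>
    intro hnd
    rw [List.nodup_cons] at hnd
    rw [List.length_cons, List.replicate_succ, List.zipWith_cons_cons, List.prod_cons,
      List.toFinset_cons, Finset.prod_insert (by simpa using hnd.1), ih hnd.2]

lemma perm_replicate_toFinset (b : ℕ) (e : ℤ) :
    (List.replicate b e).permutations.toFinset = {List.replicate b e} := by
  ext σ; simp [List.mem_permutations, List.perm_replicate]

lemma perm_sum (f : ℕ → ℤ → ℂ) :
    ∀ (l : List ℕ) (b c : ℕ), l.Nodup → l.length = b + c →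
      ∑ σ ∈ (List.replicate b (2:ℤ) ++ List.replicate c 1).permutations.toFinset,
          (List.zipWith (fun i e => f i e) l σ).prod
      = ∑ u ∈ l.toFinset.powersetCard b, (∏ i ∈ u, f i 2) * ∏ i ∈ l.toFinset \ u, f i 1 := by
  intro l
  induction l with
  | nil =>
    intro b c _ hlen
    have hb : b = 0 := by simp at hlen; omega
    have hc : c = 0 := by simp at hlen; omega
    subst hb; subst hc
    simp
  | cons a l ih =>
    intro b c hnd hlen
    have hnd' := (List.nodup_cons.1 hnd)
    have hatf : a ∉ l.toFinset := by simpa using hnd'.1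
    rcases b with _ | b'
    · -- b = 0
      rw [List.replicate_zero, List.nil_append, perm_replicate_toFinset, Finset.sum_singleton]
      have hc : (a :: l).length = c := by simpa using hlen
      rw [← hc, zipWith_replicate_prod f 1 _ hnd]
      rw [Finset.powersetCard_zero, Finset.sum_singleton, Finset.prod_empty, one_mul,
        Finset.sdiff_empty]
    · rcases c with _ | c'
      · -- c = 0
        rw [List.replicate_zero, List.append_nil, perm_replicate_toFinset, Finset.sum_singleton]
        have hb : (a :: l).length = b' + 1 := by simpa using hlen
        rw [← hb, zipWith_replicate_prod f 2 _ hnd]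
        have hcard : (a :: l).toFinset.card = (a :: l).length := by
          rw [List.card_toFinset, hnd.dedup]
        have hps : (a :: l).toFinset.powersetCard ((a :: l).length) = {(a :: l).toFinset} := by
          rw [← hcard]; exact Finset.powersetCard_self _
        rw [hps, Finset.sum_singleton, Finset.sdiff_self, Finset.prod_empty, mul_one]
      · -- b = b'+1, c = c'+1
        have hL : List.replicate (b'+1) (2:ℤ) ++ List.replicate (c'+1) 1
            = (2:ℤ) :: (List.replicate b' 2 ++ List.replicate (c'+1) 1) := by
          rw [List.replicate_succ, List.cons_append]
        have hsplit : (List.replicate (b'+1) (2:ℤ) ++ List.replicate (c'+1) 1).permutations.toFinset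
            = (((List.replicate b' (2:ℤ) ++ List.replicate (c'+1) 1).permutations.toFinset).image
                (fun τ => (2:ℤ) :: τ))
              ∪ (((List.replicate (b'+1) (2:ℤ) ++ List.replicate c' 1).permutations.toFinset).image
                (fun τ => (1:ℤ) :: τ)) := by
          ext σ
          simp only [Finset.mem_union, Finset.mem_image, List.mem_toFinset,
            List.mem_permutations]
          constructor
          · intro hσ
            have hne : σ ≠ [] := by
              intro h; rw [h] at hσ
              have := hσ.length_eq; simp at this
            obtain ⟨e, τ, rfl⟩ := List.exists_cons_of_ne_nil hne
            have he : e ∈ List.replicate (b'+1) (2:ℤ) ++ List.replicate (c'+1) 1 :=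
              hσ.mem_iff.1 (List.mem_cons_self (a := e) (l := τ))
            have he2 : e = 2 ∨ e = 1 := by
              rw [List.mem_append, List.mem_replicate, List.mem_replicate] at he
              tauto
            have herase := (List.cons_perm_iff_perm_erase.1 hσ).2
            rcases he2 with rfl | rfl
            · left
              refine ⟨τ, ?_, rfl⟩
              rw [hL, List.erase_cons_head] at herase
              exact herase
            · right
              refine ⟨τ, ?_, rfl⟩
              have h1 : (List.replicate (b'+1) (2:ℤ) ++ List.replicate (c'+1) 1).erase 1
                  = List.replicate (b'+1) (2:ℤ) ++ List.replicate c' 1 := by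
                rw [List.erase_append_right _ (by simp [List.mem_replicate]),
                  show List.replicate (c'+1) (1:ℤ) = 1 :: List.replicate c' 1 from rfl,
                  List.erase_cons_head]
              rw [h1] at herase
              exact herase
          · rintro (⟨τ, hτ, rfl⟩ | ⟨τ, hτ, rfl⟩)
            · rw [hL]
              exact hτ.cons 2
            · have h2 : ((1:ℤ) :: (List.replicate (b'+1) (2:ℤ) ++ List.replicate c' 1)).Perm
                  (List.replicate (b'+1) (2:ℤ) ++ List.replicate (c'+1) 1) := by
                rw [show List.replicate (c'+1) (1:ℤ) = 1 :: List.replicate c' 1 from rfl]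
                exact List.perm_middle.symm
              exact (hτ.cons 1).trans h2
        have hdisj : Disjoint (((List.replicate b' (2:ℤ) ++ List.replicate (c'+1) 1).permutations.toFinset).image
                (fun τ => (2:ℤ) :: τ))
              (((List.replicate (b'+1) (2:ℤ) ++ List.replicate c' 1).permutations.toFinset).image
                (fun τ => (1:ℤ) :: τ)) := by
          rw [Finset.disjoint_left]
          rintro σ h1 h2
          simp only [Finset.mem_image] at h1 h2
          obtain ⟨τ, _, rfl⟩ := h1
          obtain ⟨τ', _, h⟩ := h2
          exact absurd (List.head_eq_of_cons_eq h.symm) (by norm_num)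
        rw [hsplit, Finset.sum_union hdisj, Finset.sum_image (fun _ _ _ _ h => List.tail_eq_of_cons_eq h),
          Finset.sum_image (fun _ _ _ _ h => List.tail_eq_of_cons_eq h)]
        have hv2 : ∀ τ : List ℤ, (List.zipWith (fun i e => f i e) (a :: l) ((2:ℤ) :: τ)).prod
            = f a 2 * (List.zipWith (fun i e => f i e) l τ).prod := by
          intro τ; rw [List.zipWith_cons_cons, List.prod_cons]
        have hv1 : ∀ τ : List ℤ, (List.zipWith (fun i e => f i e) (a :: l) ((1:ℤ) :: τ)).prod
            = f a 1 * (List.zipWith (fun i e => f i e) l τ).prod := by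
          intro τ; rw [List.zipWith_cons_cons, List.prod_cons]
        rw [Finset.sum_congr rfl (fun τ _ => hv2 τ), Finset.sum_congr rfl (fun τ _ => hv1 τ),
          ← Finset.mul_sum, ← Finset.mul_sum]
        rw [ih b' (c'+1) hnd'.2 (by simp at hlen; omega),
          ih (b'+1) c' hnd'.2 (by simp at hlen; omega)]
        -- now RHS side decomposition
        rw [List.toFinset_cons, Finset.powersetCard_succ_insert hatf,
          Finset.sum_union, Finset.sum_image]
        · have hterm1 : ∀ u ∈ l.toFinset.powersetCard (b'+1),
              (∏ i ∈ u, f i 2) * ∏ i ∈ insert a l.toFinset \ u, f i 1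
              = f a 1 * ((∏ i ∈ u, f i 2) * ∏ i ∈ l.toFinset \ u, f i 1) := by
            intro u hu
            rw [Finset.mem_powersetCard] at hu
            have hau : a ∉ u := fun h => hatf (hu.1 h)
            rw [Finset.insert_sdiff_of_notMem _ hau,
              Finset.prod_insert (fun h => hatf (Finset.mem_sdiff.1 h).1)]
            ring
          have hterm2 : ∀ u ∈ l.toFinset.powersetCard b',
              (∏ i ∈ insert a u, f i 2) * ∏ i ∈ insert a l.toFinset \ insert a u, f i 1
              = f a 2 * ((∏ i ∈ u, f i 2) * ∏ i ∈ l.toFinset \ u, f i 1) := by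
            intro u hu
            rw [Finset.mem_powersetCard] at hu
            have hau : a ∉ u := fun h => hatf (hu.1 h)
            have hsd : insert a l.toFinset \ insert a u = l.toFinset \ u := by
              ext i
              simp only [Finset.mem_sdiff, Finset.mem_insert]
              constructor
              · rintro ⟨h1 | h1, h2⟩
                · exact absurd (Or.inl h1) h2
                · exact ⟨h1, fun h => h2 (Or.inr h)⟩
              · intro ⟨h1, h2⟩
                exact ⟨Or.inr h1, by rintro (rfl | h) <;> [exact hatf h1; exact h2 h]⟩
            rw [hsd, Finset.prod_insert hau]
            ring
          rw [Finset.sum_congr rfl hterm1, Finset.sum_congr rfl hterm2,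
            ← Finset.mul_sum, ← Finset.mul_sum]
          ring
        · -- injectivity of insert a
          intro u hu v hv h
          rw [Finset.mem_coe, Finset.mem_powersetCard] at hu hv
          have hau : a ∉ u := fun hh => hatf (hu.1 hh)
          have hav : a ∉ v := fun hh => hatf (hv.1 hh)
          rw [← Finset.erase_insert hau, h, Finset.erase_insert hav]
        · -- disjointness
          rw [Finset.disjoint_left]
          intro u hu h2
          rw [Finset.mem_powersetCard] at hu
          simp only [Finset.mem_image] at h2
          obtain ⟨v, _, rfl⟩ := h2
          exact hatf (hu.1 (Finset.mem_insert_self a v))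

-- assembly part (to be appended after t2/t3/t4 lemmas)
noncomputable def P2 (n b c : ℕ) : ℂ :=
  ∑ t ∈ (Finset.Icc 1 (n-1)).powersetCard (b+c), ∑ u ∈ t.powersetCard b,
    (∏ i ∈ t, (1 - zetaN n ^ i)⁻¹) * ∏ i ∈ u, (1 - zetaN n ^ i)⁻¹

lemma Yperm_eq_P2 (n b c : ℕ) :
    Yperm n (List.replicate b 2 ++ List.replicate c 1) = P2 n b c := by
  classical
  unfold Yperm qhs P2
  have hlen : ∀ σ ∈ (List.replicate b (2:ℤ) ++ List.replicate c 1).permutations.toFinset,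
      σ.length = b + c := by
    intro σ hσ
    rw [List.mem_toFinset, List.mem_permutations] at hσ
    rw [hσ.length_eq]; simp
  rw [Finset.sum_congr rfl (fun σ hσ => by rw [hlen σ hσ])]
  rw [Finset.sum_comm]
  refine Finset.sum_congr rfl fun t ht => ?_
  rw [Finset.mem_powersetCard] at ht
  have hnd : (t.sort (· ≤ ·)).Nodup := t.sort_nodup _
  have hl : (t.sort (· ≤ ·)).length = b + c := by rw [Finset.length_sort, ht.2]
  have htf : (t.sort (· ≤ ·)).toFinset = t := Finset.sort_toFinset _ _
  have := perm_sum (fun i e => (1 - zetaN n ^ i) ^ (-e)) (t.sort (· ≤ ·)) b c hnd hl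
  rw [htf] at this
  rw [this]
  refine Finset.sum_congr rfl fun u hu => ?_
  rw [Finset.mem_powersetCard] at hu
  have h2 : ∀ i : ℕ, (1 - zetaN n ^ i) ^ (-(2:ℤ)) = ((1 - zetaN n ^ i)⁻¹)^2 := by
    intro i
    rw [zpow_neg, show ((2:ℤ)) = ((2:ℕ):ℤ) from rfl, zpow_natCast, ← inv_pow]
  have h1 : ∀ i : ℕ, (1 - zetaN n ^ i) ^ (-(1:ℤ)) = (1 - zetaN n ^ i)⁻¹ := by
    intro i; rw [zpow_neg, zpow_one]
  simp only [h2, h1]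
  rw [← Finset.prod_sdiff hu.1, Finset.prod_pow]
  ring

lemma Y3_eq_P2 (n : ℕ) (B C : ℤ) (hB : 0 ≤ B) (hC : 0 ≤ C) :
    Y3 n 0 B C = P2 n B.toNat C.toNat := by
  rw [Y3, if_pos ⟨le_refl 0, hB, hC⟩]
  simpa using Yperm_eq_P2 n B.toNat C.toNat

lemma P2_zero {n : ℕ} (hn : 2 ≤ n) {b c : ℕ} (h : n - 1 < b + c) : P2 n b c = 0 := by
  unfold P2
  rw [Finset.powersetCard_eq_empty.2 (by rw [card_Icc_n hn]; exact h), Finset.sum_empty]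

lemma P2_full {n : ℕ} (hn : 2 ≤ n) {b c : ℕ} (h : b + c = n - 1) :
    P2 n b c = (1 / n) * ∑ u ∈ (Finset.Icc 1 (n-1)).powersetCard b,
      ∏ i ∈ u, (1 - zetaN n ^ i)⁻¹ := by
  have hζ : IsPrimitiveRoot (zetaN n) n := Complex.isPrimitiveRoot_exp n (by omega)
  unfold P2
  have hps : (Finset.Icc 1 (n-1)).powersetCard (b+c) = {Finset.Icc 1 (n-1)} := by
    have h2 := Finset.powersetCard_self (Finset.Icc 1 (n-1))
    rw [card_Icc_n hn] at h2
    rw [h]; exact h2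
  rw [hps, Finset.sum_singleton, Finset.mul_sum]
  refine Finset.sum_congr rfl fun u hu => ?_
  have hprod : ∏ i ∈ Finset.Icc 1 (n-1), (1 - zetaN n ^ i)⁻¹ = 1 / n := by
    rw [Finset.prod_inv_distrib, prod_y_eq_n hζ hn, one_div]
  rw [hprod]

lemma e_mul_e_coeff (n p q : ℕ) :
    (∑ A ∈ (Finset.Icc 1 (n-1)).powersetCard p, ∏ i ∈ A, (1 - zetaN n ^ i)⁻¹)
      * (∑ B ∈ (Finset.Icc 1 (n-1)).powersetCard q, ∏ i ∈ B, (1 - zetaN n ^ i)⁻¹)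
    = ∑ b ∈ Finset.range (min p q + 1),
        ((p+q-2*b).choose (p-b) : ℂ) * P2 n b (p+q-2*b) := by
  rw [e_mul_e]
  refine Finset.sum_congr rfl fun b hb => ?_
  rw [Finset.mem_range] at hb
  have hpq : b + (p+q-2*b) = p+q-b := by omega
  unfold P2
  rw [hpq, Finset.mul_sum]
  refine Finset.sum_congr rfl fun t ht => ?_
  rw [Finset.mem_powersetCard] at ht
  rw [Finset.mul_sum]
  refine Finset.sum_congr rfl fun u hu => ?_
  rw [Finset.mem_powersetCard] at hu
  rw [Finset.sum_const, Finset.card_powersetCard, Finset.card_sdiff_of_subset hu.1, ht.2, hu.2,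
    (by omega : p + q - b - b = p + q - 2*b), nsmul_eq_mul]

lemma ichoose_coe (A B : ℕ) (h : B ≤ A) : ichoose (A : ℤ) (B : ℤ) = (A.choose B : ℤ) := by
  rw [ichoose, if_pos ⟨Int.natCast_nonneg B, by exact_mod_cast h⟩]
  simp

lemma Y3_coe (n A C : ℕ) : Y3 n 0 (A : ℤ) (C : ℤ) = P2 n A C := by
  rw [Y3_eq_P2 n A C (Int.natCast_nonneg A) (Int.natCast_nonneg C)]
  simp

end Aux

theorem stmt2 (n m ℓ : ℕ) (hn : 2 ≤ n) (hm : m ≤ n - 1) (hℓ : ℓ ≤ m) :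
    ∑ j ∈ Finset.range (n - m - 1),
      (ichoose ((n : ℤ) - m + ℓ - 3 - 2 * j) ((ℓ : ℤ) - 1 - j) : ℂ) *
        Y3 n 0 ((m : ℤ) - ℓ + 1 + j) ((n : ℤ) - m + ℓ - 3 - 2 * j)
      = 1 / ((n : ℂ) * (m + 1)) * ((n - 1).choose m : ℂ) *
          ((n.choose ℓ : ℂ) - ((m + 1).choose ℓ : ℂ)) := by
  classical
  have hζ : IsPrimitiveRoot (zetaN n) n := Complex.isPrimitiveRoot_exp n (by omega)
  set f : ℕ → ℂ := fun b =>
    ((m+(n-1-ℓ)-2*b).choose (m-b) : ℂ) * P2 n b (m+(n-1-ℓ)-2*b) with hf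
  have key : (∑ A ∈ (Finset.Icc 1 (n-1)).powersetCard m, ∏ i ∈ A, (1 - zetaN n ^ i)⁻¹)
      * (∑ B ∈ (Finset.Icc 1 (n-1)).powersetCard (n-1-ℓ), ∏ i ∈ B, (1 - zetaN n ^ i)⁻¹)
      = ∑ b ∈ Finset.range (min m (n-1-ℓ) + 1), f b := e_mul_e_coeff n m (n-1-ℓ)
  have split1 : ∑ b ∈ Finset.range (min m (n-1-ℓ) + 1), f b
      = (∑ b ∈ Finset.Ico 0 (m-ℓ), f b)
        + (f (m-ℓ) + ∑ b ∈ Finset.Ico (m-ℓ+1) (min m (n-1-ℓ) + 1), f b) := by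
    rw [Finset.range_eq_Ico,
      ← Finset.sum_Ico_consecutive f (Nat.zero_le (m-ℓ)) (by omega),
      Finset.sum_eq_sum_Ico_succ_bot (by omega : m-ℓ < min m (n-1-ℓ) + 1)]
  have z1 : ∑ b ∈ Finset.Ico 0 (m-ℓ), f b = 0 := by
    refine Finset.sum_eq_zero fun b hb => ?_
    rw [Finset.mem_Ico] at hb
    rw [hf]
    dsimp only
    rw [P2_zero hn (by omega), mul_zero]
  have hIco : f (m-ℓ) + ∑ b ∈ Finset.Ico (m-ℓ+1) (min m (n-1-ℓ) + 1), f b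
      = (∑ A ∈ (Finset.Icc 1 (n-1)).powersetCard m, ∏ i ∈ A, (1 - zetaN n ^ i)⁻¹)
      * (∑ B ∈ (Finset.Icc 1 (n-1)).powersetCard (n-1-ℓ), ∏ i ∈ B, (1 - zetaN n ^ i)⁻¹) := by
    rw [key, split1, z1, zero_add]
  -- identify theorem LHS with the Ico sum
  have hLHS : ∑ j ∈ Finset.range (n - m - 1),
      (ichoose ((n : ℤ) - m + ℓ - 3 - 2 * j) ((ℓ : ℤ) - 1 - j) : ℂ) *
        Y3 n 0 ((m : ℤ) - ℓ + 1 + j) ((n : ℤ) - m + ℓ - 3 - 2 * j)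
      = ∑ b ∈ Finset.Ico (m-ℓ+1) (min m (n-1-ℓ) + 1), f b := by
    rw [Finset.sum_Ico_eq_sum_range,
      (by omega : min m (n-1-ℓ) + 1 - (m-ℓ+1) = min ℓ (n-m-1))]
    rw [Finset.range_eq_Ico,
      ← Finset.sum_Ico_consecutive _ (Nat.zero_le (min ℓ (n-m-1))) (by omega : min ℓ (n-m-1) ≤ n-m-1)]
    have junk : ∑ j ∈ Finset.Ico (min ℓ (n-m-1)) (n-m-1),
        (ichoose ((n : ℤ) - m + ℓ - 3 - 2 * j) ((ℓ : ℤ) - 1 - j) : ℂ) *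
          Y3 n 0 ((m : ℤ) - ℓ + 1 + j) ((n : ℤ) - m + ℓ - 3 - 2 * j) = 0 := by
      refine Finset.sum_eq_zero fun j hj => ?_
      rw [Finset.mem_Ico] at hj
      have hℓj : ℓ ≤ j := by omega
      have : ichoose ((n : ℤ) - m + ℓ - 3 - 2 * j) ((ℓ : ℤ) - 1 - j) = 0 := by
        rw [ichoose, if_neg]
        omega
      rw [this]
      simp
    rw [junk, add_zero]
    rw [Finset.range_eq_Ico]
    refine Finset.sum_congr rfl fun j hj => ?_
    rw [Finset.mem_Ico] at hj
    have hj1 : j < ℓ := by omega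
    have hj2 : j < n - m - 1 := by omega
    have e1 : (n : ℤ) - m + ℓ - 3 - 2*j = ((n-m+ℓ-3-2*j : ℕ) : ℤ) := by omega
    have e2 : (m : ℤ) - ℓ + 1 + j = ((m-ℓ+1+j : ℕ) : ℤ) := by omega
    have e3 : (ℓ : ℤ) - 1 - j = ((ℓ-1-j : ℕ) : ℤ) := by omega
    rw [e1, e2, e3, ichoose_coe _ _ (by omega), Y3_coe]
    rw [hf]
    dsimp only
    rw [(by omega : m+(n-1-ℓ)-2*(m-ℓ+1+j) = n-m+ℓ-3-2*j),
      (by omega : m-(m-ℓ+1+j) = ℓ-1-j)]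
    push_cast
    ring
  -- evaluate f (m-ℓ)
  have hfm : f (m-ℓ) = ((n-1+ℓ-m).choose ℓ : ℂ) * ((1/n) *
      ∑ u ∈ (Finset.Icc 1 (n-1)).powersetCard (m-ℓ), ∏ i ∈ u, (1 - zetaN n ^ i)⁻¹) := by
    rw [hf]
    dsimp only
    rw [(by omega : m+(n-1-ℓ)-2*(m-ℓ) = n-1+ℓ-m), (by omega : m-(m-ℓ) = ℓ),
      P2_full hn (by omega : (m-ℓ) + (n-1+ℓ-m) = n-1)]
  -- evaluate elementary symmetric values
  have hEm := esymm_x hζ hn m (by omega)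
  have hEq := esymm_x hζ hn (n-1-ℓ) (by omega)
  have hEml := esymm_x hζ hn (m-ℓ) (by omega)
  rw [hLHS]
  have hsum : ∑ b ∈ Finset.Ico (m-ℓ+1) (min m (n-1-ℓ) + 1), f b
      = (∑ A ∈ (Finset.Icc 1 (n-1)).powersetCard m, ∏ i ∈ A, (1 - zetaN n ^ i)⁻¹)
      * (∑ B ∈ (Finset.Icc 1 (n-1)).powersetCard (n-1-ℓ), ∏ i ∈ B, (1 - zetaN n ^ i)⁻¹)
      - f (m-ℓ) := by linear_combination hIco
  rw [hsum, hfm, hEm, hEq, hEml]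
  -- now pure arithmetic with binomial coefficients
  have hq1 : n-1-ℓ+1 = n-ℓ := by omega
  rw [hq1, Nat.choose_symm (by omega : ℓ ≤ n)]
  have h1 : n * (n-1).choose m = n.choose (m+1) * (m+1) := by
    have := Nat.add_one_mul_choose_eq (n-1) m
    rwa [(by omega : n - 1 + 1 = n)] at this
  have h3 : (n-1+ℓ-m).choose ℓ * n.choose (m-ℓ+1) = n.choose (m+1) * (m+1).choose ℓ := by
    have hc := Nat.choose_mul (n := n) (k := m+1) (s := m+1-ℓ) (by omega)
    rw [Nat.choose_symm (by omega : ℓ ≤ m+1), (by omega : m+1-(m+1-ℓ) = ℓ),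
      (by omega : n-(m+1-ℓ) = n-1+ℓ-m), (by omega : m+1-ℓ = m-ℓ+1)] at hc
    rw [mul_comm]
    exact hc.symm
  have hn0 : (n:ℂ) ≠ 0 := Nat.cast_ne_zero.2 (by omega)
  have hm0 : (m:ℂ) + 1 ≠ 0 := by
    have : ((m+1 : ℕ) : ℂ) ≠ 0 := Nat.cast_ne_zero.2 (by omega)
    push_cast at this; exact this
  have h1c : (n:ℂ) * ((n-1).choose m : ℂ) = (n.choose (m+1) : ℂ) * ((m:ℂ)+1) := by
    exact_mod_cast congrArg (Nat.cast : ℕ → ℂ) h1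
  have h3c : ((n-1+ℓ-m).choose ℓ : ℂ) * (n.choose (m-ℓ+1) : ℂ)
      = (n.choose (m+1) : ℂ) * ((m+1).choose ℓ : ℂ) := by
    exact_mod_cast congrArg (Nat.cast : ℕ → ℂ) h3
  have e1 : ((n-1).choose m : ℂ) = (n.choose (m+1) : ℂ) * ((m:ℂ)+1) / n := by
    rw [eq_div_iff hn0]; linear_combination h1c
  rw [show ((n-1+ℓ-m).choose ℓ : ℂ) * ((1/(n:ℂ)) * ((n.choose (m-ℓ+1) : ℂ)/n))
      = ((n-1+ℓ-m).choose ℓ : ℂ) * (n.choose (m-ℓ+1) : ℂ) / ((n:ℂ)*n) by ring, h3c, e1]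
  field_simp
end

section
/- Let n, m, ℓ be integers with n−1 ≥ m ≥ ℓ ≥ 0 and n ≥ 2. Then 𝔷_n(2,…,2) (m entries) · 𝔷_n(−1,…,−1) (ℓ entries) = 𝒴_n(2^{m−ℓ}, 1^{ℓ}) + n · Σ_{j=0}^{n−m−2} 𝒴_n(3^{m−ℓ+1+j}, 2^{ℓ−1−j}, 1^{n−m−2−j}), where the factor n arises as ∏_{j=1}^{n−1}(1 − ζ_n^{j}) = n. -/
open Finset

/-- `PC U k`: size-`k` subsets of `U`, empty when `k < 0`. -/
def PC (U : Finset ℕ) (k : ℤ) : Finset (Finset ℕ) :=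
  if 0 ≤ k then U.powersetCard k.toNat else ∅

lemma mem_PC {U : Finset ℕ} {k : ℤ} {A : Finset ℕ} :
    A ∈ PC U k ↔ 0 ≤ k ∧ A ⊆ U ∧ (A.card : ℤ) = k := by
  unfold PC
  split_ifs with h
  · rw [Finset.mem_powersetCard]
    constructor
    · rintro ⟨h1, h2⟩; exact ⟨h, h1, by omega⟩
    · rintro ⟨_, h1, h2⟩; exact ⟨h1, by omega⟩
  · simp only [Finset.notMem_empty, false_iff]
    rintro ⟨h1, -⟩; exact h h1

lemma PC_neg {U : Finset ℕ} {k : ℤ} (h : k < 0) : PC U k = ∅ := by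
  unfold PC; rw [if_neg (by omega)]

lemma PC_zero {U : Finset ℕ} : PC U 0 = {∅} := by
  unfold PC; rw [if_pos le_rfl]; simpa using Finset.powersetCard_zero U

lemma PC_empty {k : ℤ} (h : k ≠ 0) : PC ∅ k = ∅ := by
  rcases lt_or_gt_of_ne h with h' | h'
  · exact PC_neg h'
  · unfold PC; rw [if_pos (by omega)]
    rw [Finset.powersetCard_eq_empty]
    simpa using (by omega : 0 < k.toNat)

lemma PC_card_lt {U : Finset ℕ} {k : ℤ} (h : (U.card : ℤ) < k) : PC U k = ∅ := by
  unfold PC; rw [if_pos (by omega)]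
  rw [Finset.powersetCard_eq_empty]; omega

/-- Splitting a sum over subsets of `insert x U` (ℕ-version). -/
lemma sum_powersetCard_succ {x : ℕ} {U : Finset ℕ} (hx : x ∉ U) (k : ℕ)
    (G : Finset ℕ → ℂ) :
    ∑ A ∈ (insert x U).powersetCard (k+1), G A
      = ∑ A ∈ U.powersetCard (k+1), G A + ∑ A ∈ U.powersetCard k, G (insert x A) := by
  rw [show k + 1 = Nat.succ k from rfl, Finset.powersetCard_succ_insert hx]
  rw [Finset.sum_union, Finset.sum_image]
  · intro A hA B hB hAB
    rw [Finset.mem_coe, Finset.mem_powersetCard] at hA hB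
    have hxA : x ∉ A := fun h => hx (hA.1 h)
    have hxB : x ∉ B := fun h => hx (hB.1 h)
    rw [← Finset.erase_insert hxA, ← Finset.erase_insert hxB, hAB]
  · rw [Finset.disjoint_left]
    intro A hA hA2
    rw [Finset.mem_powersetCard] at hA
    rw [Finset.mem_image] at hA2
    obtain ⟨B, -, rfl⟩ := hA2
    exact hx (hA.1 (Finset.mem_insert_self x B))

lemma sum_PC_insert {x : ℕ} {U : Finset ℕ} (hx : x ∉ U) (k : ℤ)
    (G : Finset ℕ → ℂ) :
    ∑ A ∈ PC (insert x U) k, G A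
      = ∑ A ∈ PC U k, G A + ∑ A ∈ PC U (k-1), G (insert x A) := by
  rcases lt_trichotomy k 0 with h | h | h
  · rw [PC_neg h, PC_neg h, PC_neg (by omega)]; simp
  · subst h
    rw [PC_zero, PC_zero, PC_neg (by omega)]; simp
  · have h1 : 0 ≤ k := le_of_lt h
    have h2 : 0 ≤ k - 1 := by omega
    unfold PC
    rw [if_pos h1, if_pos h1, if_pos h2]
    have : k.toNat = (k-1).toNat + 1 := by omega
    rw [this, sum_powersetCard_succ hx]

noncomputable section

def D1 (h : ℕ → ℂ) (U : Finset ℕ) (c : ℤ) : ℂ := ∑ C ∈ PC U c, ∏ i ∈ C, h i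

def D2 (g h : ℕ → ℂ) (U : Finset ℕ) (b c : ℤ) : ℂ :=
  ∑ B ∈ PC U b, (∏ i ∈ B, g i) * D1 h (U \ B) c

def D3 (f g h : ℕ → ℂ) (U : Finset ℕ) (a b c : ℤ) : ℂ :=
  ∑ A ∈ PC U a, (∏ i ∈ A, f i) * D2 g h (U \ A) b c

variable {f g h : ℕ → ℂ} {U : Finset ℕ} {a b c : ℤ}

lemma D1_neg (hc : c < 0) : D1 h U c = 0 := by rw [D1, PC_neg hc]; simp
lemma D1_zero : D1 h U 0 = 1 := by rw [D1, PC_zero]; simp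
lemma D1_card_lt (hc : (U.card : ℤ) < c) : D1 h U c = 0 := by
  rw [D1, PC_card_lt hc]; simp

lemma D2_neg (hbc : b < 0 ∨ c < 0) : D2 g h U b c = 0 := by
  rcases hbc with hb | hc
  · rw [D2, PC_neg hb]; simp
  · rw [D2]
    refine Finset.sum_eq_zero fun B _ => ?_
    rw [D1_neg hc, mul_zero]

lemma D2_card_lt (hbc : (U.card : ℤ) < b + c) : D2 g h U b c = 0 := by
  rw [D2]
  refine Finset.sum_eq_zero fun B hB => ?_
  rw [mem_PC] at hB
  obtain ⟨hb0, hBU, hBcard⟩ := hB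
  have : (U \ B).card = U.card - B.card := Finset.card_sdiff_of_subset hBU
  have hle : B.card ≤ U.card := Finset.card_le_card hBU
  rw [D1_card_lt (by omega), mul_zero]

lemma D3_neg (habc : a < 0 ∨ b < 0 ∨ c < 0) : D3 f g h U a b c = 0 := by
  rcases habc with ha | hbc
  · rw [D3, PC_neg ha]; simp
  · rw [D3]
    refine Finset.sum_eq_zero fun A _ => ?_
    rw [D2_neg hbc, mul_zero]

lemma D3_card_lt (habc : (U.card : ℤ) < a + b + c) : D3 f g h U a b c = 0 := by
  rw [D3]
  refine Finset.sum_eq_zero fun A hA => ?_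
  rw [mem_PC] at hA
  obtain ⟨ha0, hAU, hAcard⟩ := hA
  have : (U \ A).card = U.card - A.card := Finset.card_sdiff_of_subset hAU
  have hle : A.card ≤ U.card := Finset.card_le_card hAU
  rw [D2_card_lt (by omega), mul_zero]

lemma D2_empty : D2 g h ∅ b c = if b = 0 ∧ c = 0 then 1 else 0 := by
  by_cases hb : b = 0
  · subst hb
    rw [D2, PC_zero]
    simp only [Finset.sum_singleton, Finset.prod_empty, one_mul, Finset.empty_sdiff]
    by_cases hc : c = 0
    · subst hc; rw [D1_zero]; simp
    · rw [if_neg (by tauto)]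
      rcases lt_or_gt_of_ne hc with h' | h'
      · exact D1_neg h'
      · exact D1_card_lt (by simpa using h')
  · rw [if_neg (by tauto), D2, PC_empty hb]; simp

lemma D3_empty : D3 f g h ∅ a b c = if a = 0 ∧ b = 0 ∧ c = 0 then 1 else 0 := by
  by_cases ha : a = 0
  · subst ha
    rw [D3, PC_zero]
    simp only [Finset.sum_singleton, Finset.prod_empty, one_mul, Finset.empty_sdiff]
    rw [D2_empty]
    by_cases hbc : b = 0 ∧ c = 0
    · rw [if_pos hbc]; simp [hbc]
    · rw [if_neg hbc, if_neg (by tauto)]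
  · rw [if_neg (by tauto), D3, PC_empty ha]; simp

lemma D3_zero : D3 f g h U 0 0 0 = 1 := by
  rw [D3, PC_zero]
  simp only [Finset.sum_singleton, Finset.prod_empty, one_mul, Finset.sdiff_empty]
  rw [D2, PC_zero]
  simp only [Finset.sum_singleton, Finset.prod_empty, one_mul, Finset.sdiff_empty]
  exact D1_zero

lemma insert_sdiff_comm {x : ℕ} {U A : Finset ℕ} (hxA : x ∉ A) :
    (insert x U) \ A = insert x (U \ A) := by
  ext i
  simp only [Finset.mem_sdiff, Finset.mem_insert]
  constructor
  · rintro ⟨hi | hi, hi2⟩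
    · exact Or.inl hi
    · exact Or.inr ⟨hi, hi2⟩
  · rintro (rfl | ⟨hi, hi2⟩)
    · exact ⟨Or.inl rfl, hxA⟩
    · exact ⟨Or.inr hi, hi2⟩

lemma insert_sdiff_insert' {x : ℕ} {U A : Finset ℕ} (hxU : x ∉ U) :
    (insert x U) \ (insert x A) = U \ A := by
  ext i
  simp only [Finset.mem_sdiff, Finset.mem_insert, not_or]
  constructor
  · rintro ⟨hi | hi, hi2, hi3⟩
    · exact absurd hi hi2
    · exact ⟨hi, hi3⟩
  · rintro ⟨hi, hi2⟩
    exact ⟨Or.inr hi, fun hx => hxU (hx ▸ hi), hi2⟩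

lemma D1_insert {x : ℕ} (hx : x ∉ U) :
    D1 h (insert x U) c = h x * D1 h U (c-1) + D1 h U c := by
  rw [D1, sum_PC_insert hx]
  rw [add_comm]
  congr 1
  rw [D1, Finset.mul_sum]
  refine Finset.sum_congr rfl fun C hC => ?_
  rw [mem_PC] at hC
  rw [Finset.prod_insert (fun hxC => hx (hC.2.1 hxC))]

lemma D2_insert {x : ℕ} (hx : x ∉ U) :
    D2 g h (insert x U) b c
      = g x * D2 g h U (b-1) c + h x * D2 g h U b (c-1) + D2 g h U b c := by
  rw [D2, sum_PC_insert hx]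
  have e1 : ∀ B ∈ PC U b, (∏ i ∈ B, g i) * D1 h ((insert x U) \ B) c
      = h x * ((∏ i ∈ B, g i) * D1 h (U \ B) (c-1)) + (∏ i ∈ B, g i) * D1 h (U \ B) c := by
    intro B hB
    rw [mem_PC] at hB
    have hxB : x ∉ B := fun hxB => hx (hB.2.1 hxB)
    rw [insert_sdiff_comm hxB, D1_insert (fun hh => hx (Finset.mem_sdiff.1 hh).1)]
    ring
  rw [Finset.sum_congr rfl e1]
  have e2 : ∀ B ∈ PC U (b-1), (∏ i ∈ insert x B, g i) * D1 h ((insert x U) \ (insert x B)) c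
      = g x * ((∏ i ∈ B, g i) * D1 h (U \ B) c) := by
    intro B hB
    rw [mem_PC] at hB
    have hxB : x ∉ B := fun hxB => hx (hB.2.1 hxB)
    rw [Finset.prod_insert hxB, insert_sdiff_insert' hx]
    ring
  rw [Finset.sum_congr rfl e2]
  rw [Finset.sum_add_distrib, ← Finset.mul_sum, ← Finset.mul_sum]
  rw [← D2, ← D2, ← D2]
  ring

lemma D3_insert {x : ℕ} (hx : x ∉ U) :
    D3 f g h (insert x U) a b c
      = f x * D3 f g h U (a-1) b c + g x * D3 f g h U a (b-1) c
        + h x * D3 f g h U a b (c-1) + D3 f g h U a b c := by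
  rw [D3, sum_PC_insert hx]
  have e1 : ∀ A ∈ PC U a, (∏ i ∈ A, f i) * D2 g h ((insert x U) \ A) b c
      = g x * ((∏ i ∈ A, f i) * D2 g h (U \ A) (b-1) c)
        + (h x * ((∏ i ∈ A, f i) * D2 g h (U \ A) b (c-1))
        + (∏ i ∈ A, f i) * D2 g h (U \ A) b c) := by
    intro A hA
    rw [mem_PC] at hA
    have hxA : x ∉ A := fun hxA => hx (hA.2.1 hxA)
    rw [insert_sdiff_comm hxA, D2_insert (fun hh => hx (Finset.mem_sdiff.1 hh).1)]
    ring
  rw [Finset.sum_congr rfl e1]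
  have e2 : ∀ A ∈ PC U (a-1), (∏ i ∈ insert x A, f i) * D2 g h ((insert x U) \ (insert x A)) b c
      = f x * ((∏ i ∈ A, f i) * D2 g h (U \ A) b c) := by
    intro A hA
    rw [mem_PC] at hA
    have hxA : x ∉ A := fun hxA => hx (hA.2.1 hxA)
    rw [Finset.prod_insert hxA, insert_sdiff_insert' hx]
    ring
  rw [Finset.sum_congr rfl e2]
  rw [Finset.sum_add_distrib, Finset.sum_add_distrib, ← Finset.mul_sum, ← Finset.mul_sum, ← Finset.mul_sum]
  rw [← D3, ← D3, ← D3, ← D3]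
  ring

end


/-- The multiset with `a` threes, `b` twos, `c` ones (via `toNat`). -/
def MS (a b c : ℤ) : Multiset ℤ :=
  Multiset.replicate a.toNat 3 + Multiset.replicate b.toNat 2 + Multiset.replicate c.toNat 1

def LL (a b c : ℕ) : List ℤ :=
  List.replicate a 3 ++ List.replicate b 2 ++ List.replicate c 1

def PermF (a b c : ℤ) : Finset (List ℤ) :=
  if 0 ≤ a ∧ 0 ≤ b ∧ 0 ≤ c then (LL a.toNat b.toNat c.toNat).permutations.toFinset else ∅

lemma coe_LL (x y z : ℕ) :
    ((LL x y z : List ℤ) : Multiset ℤ)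
      = Multiset.replicate x 3 + Multiset.replicate y 2 + Multiset.replicate z 1 := by
  rw [LL, List.append_assoc, ← Multiset.coe_add, ← Multiset.coe_add,
    Multiset.coe_replicate, Multiset.coe_replicate, Multiset.coe_replicate, add_assoc]

lemma count_MS (e : ℤ) (a b c : ℤ) :
    Multiset.count e (MS a b c)
      = (if e = 3 then a.toNat else 0) + (if e = 2 then b.toNat else 0)
        + (if e = 1 then c.toNat else 0) := by
  simp only [MS, Multiset.count_add, Multiset.count_replicate]
  split_ifs <;> omega

lemma card_MS (a b c : ℤ) : Multiset.card (MS a b c) = a.toNat + b.toNat + c.toNat := by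
  simp [MS]

lemma mem_MS {e : ℤ} {a b c : ℤ} (h : e ∈ MS a b c) : e = 3 ∨ e = 2 ∨ e = 1 := by
  simp only [MS, Multiset.mem_add, Multiset.mem_replicate] at h
  tauto

lemma MS_cons3 {a b c : ℤ} (h : 1 ≤ a) : MS a b c = 3 ::ₘ MS (a-1) b c := by
  ext e
  rw [Multiset.count_cons]
  rw [count_MS, count_MS]
  by_cases h3 : e = 3 <;> by_cases h2 : e = 2 <;> by_cases h1 : e = 1 <;>
    simp [h3, h2, h1] <;> omega

lemma MS_cons2 {a b c : ℤ} (h : 1 ≤ b) : MS a b c = 2 ::ₘ MS a (b-1) c := by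
  ext e
  rw [Multiset.count_cons]
  rw [count_MS, count_MS]
  by_cases h3 : e = 3 <;> by_cases h2 : e = 2 <;> by_cases h1 : e = 1 <;>
    simp [h3, h2, h1] <;> omega

lemma MS_cons1 {a b c : ℤ} (h : 1 ≤ c) : MS a b c = 1 ::ₘ MS a b (c-1) := by
  ext e
  rw [Multiset.count_cons]
  rw [count_MS, count_MS]
  by_cases h3 : e = 3 <;> by_cases h2 : e = 2 <;> by_cases h1 : e = 1 <;>
    simp [h3, h2, h1] <;> omega

lemma mem_PermF {σ : List ℤ} {a b c : ℤ} :
    σ ∈ PermF a b c ↔ (0 ≤ a ∧ 0 ≤ b ∧ 0 ≤ c) ∧ (σ : Multiset ℤ) = MS a b c := by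
  unfold PermF
  split_ifs with h
  · rw [List.mem_toFinset, List.mem_permutations]
    rw [← Multiset.coe_eq_coe, coe_LL]
    unfold MS
    tauto
  · simp only [Finset.notMem_empty, false_iff]
    tauto

lemma cons3_MS {t : Multiset ℤ} {a b c : ℤ} (ha : 0 ≤ a) :
    ((3 : ℤ) ::ₘ t = MS a b c) ↔ (0 ≤ a - 1 ∧ t = MS (a-1) b c) := by
  constructor
  · intro h
    have hc : Multiset.count 3 ((3:ℤ) ::ₘ t) = Multiset.count 3 (MS a b c) := by rw [h]
    rw [Multiset.count_cons_self, count_MS] at hc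
    norm_num at hc
    have ha1 : 1 ≤ a := by omega
    rw [MS_cons3 ha1] at h
    exact ⟨by omega, (Multiset.cons_inj_right _).mp h⟩
  · rintro ⟨h1, rfl⟩
    exact (MS_cons3 (by omega)).symm

lemma cons2_MS {t : Multiset ℤ} {a b c : ℤ} (hb : 0 ≤ b) :
    ((2 : ℤ) ::ₘ t = MS a b c) ↔ (0 ≤ b - 1 ∧ t = MS a (b-1) c) := by
  constructor
  · intro h
    have hc : Multiset.count 2 ((2:ℤ) ::ₘ t) = Multiset.count 2 (MS a b c) := by rw [h]
    rw [Multiset.count_cons_self, count_MS] at hc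
    norm_num at hc
    have hb1 : 1 ≤ b := by omega
    rw [MS_cons2 hb1] at h
    exact ⟨by omega, (Multiset.cons_inj_right _).mp h⟩
  · rintro ⟨h1, rfl⟩
    exact (MS_cons2 (by omega)).symm

lemma cons1_MS {t : Multiset ℤ} {a b c : ℤ} (hc : 0 ≤ c) :
    ((1 : ℤ) ::ₘ t = MS a b c) ↔ (0 ≤ c - 1 ∧ t = MS a b (c-1)) := by
  constructor
  · intro h
    have hcc : Multiset.count 1 ((1:ℤ) ::ₘ t) = Multiset.count 1 (MS a b c) := by rw [h]
    rw [Multiset.count_cons_self, count_MS] at hcc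
    norm_num at hcc
    have hc1 : 1 ≤ c := by omega
    rw [MS_cons1 hc1] at h
    exact ⟨by omega, (Multiset.cons_inj_right _).mp h⟩
  · rintro ⟨h1, rfl⟩
    exact (MS_cons1 (by omega)).symm

lemma PermF_decomp {a b c : ℤ} (ha : 0 ≤ a) (hb : 0 ≤ b) (hc : 0 ≤ c)
    (hsum : 0 < a + b + c) :
    PermF a b c
      = ((PermF (a-1) b c).image (List.cons 3))
        ∪ (((PermF a (b-1) c).image (List.cons 2))
          ∪ ((PermF a b (c-1)).image (List.cons 1))) := by
  ext σ
  simp only [Finset.mem_union, Finset.mem_image, mem_PermF]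
  constructor
  · rintro ⟨-, hσ⟩
    have hne : σ ≠ [] := by
      rintro rfl
      have := card_MS a b c
      rw [← hσ] at this
      simp at this
      omega
    obtain ⟨h, t, rfl⟩ := List.exists_cons_of_ne_nil hne
    have hcoe : ((h :: t : List ℤ) : Multiset ℤ) = h ::ₘ (t : Multiset ℤ) := rfl
    rw [hcoe] at hσ
    have hmem : h ∈ MS a b c := by
      rw [← hσ]; exact Multiset.mem_cons_self _ _
    rcases mem_MS hmem with rfl | rfl | rfl
    · left
      obtain ⟨h1, h2⟩ := (cons3_MS ha).mp hσ
      exact ⟨t, ⟨⟨h1, hb, hc⟩, h2⟩, rfl⟩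
    · right; left
      obtain ⟨h1, h2⟩ := (cons2_MS hb).mp hσ
      exact ⟨t, ⟨⟨ha, h1, hc⟩, h2⟩, rfl⟩
    · right; right
      obtain ⟨h1, h2⟩ := (cons1_MS hc).mp hσ
      exact ⟨t, ⟨⟨ha, hb, h1⟩, h2⟩, rfl⟩
  · rintro (⟨t, ⟨⟨h1, -, -⟩, h2⟩, rfl⟩ | ⟨t, ⟨⟨-, h1, -⟩, h2⟩, rfl⟩ | ⟨t, ⟨⟨-, -, h1⟩, h2⟩, rfl⟩)
    · refine ⟨⟨ha, hb, hc⟩, ?_⟩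
      show (3 : ℤ) ::ₘ (t : Multiset ℤ) = MS a b c
      exact (cons3_MS ha).mpr ⟨h1, h2⟩
    · refine ⟨⟨ha, hb, hc⟩, ?_⟩
      show (2 : ℤ) ::ₘ (t : Multiset ℤ) = MS a b c
      exact (cons2_MS hb).mpr ⟨h1, h2⟩
    · refine ⟨⟨ha, hb, hc⟩, ?_⟩
      show (1 : ℤ) ::ₘ (t : Multiset ℤ) = MS a b c
      exact (cons1_MS hc).mpr ⟨h1, h2⟩

lemma permSplit {a b c : ℤ} (ha : 0 ≤ a) (hb : 0 ≤ b) (hc : 0 ≤ c)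
    (hsum : 0 < a + b + c) (H : List ℤ → ℂ) :
    ∑ σ ∈ PermF a b c, H σ
      = (∑ σ ∈ PermF (a-1) b c, H (3 :: σ)) + (∑ σ ∈ PermF a (b-1) c, H (2 :: σ))
        + (∑ σ ∈ PermF a b (c-1), H (1 :: σ)) := by
  rw [PermF_decomp ha hb hc hsum]
  rw [Finset.sum_union, Finset.sum_union, Finset.sum_image, Finset.sum_image, Finset.sum_image]
  · ring
  · intro x _ y _ h; exact List.tail_eq_of_cons_eq h
  · intro x _ y _ h; exact List.tail_eq_of_cons_eq h
  · intro x _ y _ h; exact List.tail_eq_of_cons_eq h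
  · rw [Finset.disjoint_left]
    rintro σ h1 h2
    rw [Finset.mem_image] at h1 h2
    obtain ⟨x, -, rfl⟩ := h1
    obtain ⟨y, -, hy⟩ := h2
    have := List.head_eq_of_cons_eq hy
    norm_num at this
  · rw [Finset.disjoint_left]
    rintro σ h1 h2
    rw [Finset.mem_union, Finset.mem_image, Finset.mem_image] at h2
    rw [Finset.mem_image] at h1
    obtain ⟨x, -, rfl⟩ := h1
    rcases h2 with ⟨y, -, hy⟩ | ⟨y, -, hy⟩ <;>
    · have := List.head_eq_of_cons_eq hy
      norm_num at this



lemma zetaN_primitive {n : ℕ} (hn : 2 ≤ n) : IsPrimitiveRoot (zetaN n) n := by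
  have := Complex.isPrimitiveRoot_exp n (by omega)
  simpa [zetaN, mul_comm] using this

lemma one_sub_zetaN_ne {n : ℕ} (hn : 2 ≤ n) {i : ℕ} (hi : i ∈ Finset.Icc 1 (n-1)) :
    (1 : ℂ) - zetaN n ^ i ≠ 0 := by
  rw [Finset.mem_Icc] at hi
  have h := (zetaN_primitive hn).pow_ne_one_of_pos_of_lt (by omega : i ≠ 0) (by omega : i < n)
  intro hc
  exact h (by linear_combination -hc)

lemma prod_one_sub_zetaN {n : ℕ} (hn : 2 ≤ n) :
    ∏ i ∈ Finset.Icc 1 (n-1), ((1 : ℂ) - zetaN n ^ i) = n := by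
  classical
  have hζ := zetaN_primitive hn
  have hpos : 0 < n := by omega
  -- polynomial identity
  have h1 : (Polynomial.X : Polynomial ℂ) ^ n - 1
      = ∏ μ ∈ Polynomial.nthRootsFinset n (1 : ℂ), (Polynomial.X - Polynomial.C μ) :=
    Polynomial.X_pow_sub_one_eq_prod hpos hζ
  have h1mem : (1 : ℂ) ∈ Polynomial.nthRootsFinset n (1 : ℂ) := by
    rw [Polynomial.mem_nthRootsFinset hpos]; simp
  have h2 : (Polynomial.X : Polynomial ℂ) ^ n - 1
      = (Polynomial.X - Polynomial.C 1)
        * ∏ μ ∈ (Polynomial.nthRootsFinset n (1 : ℂ)).erase 1, (Polynomial.X - Polynomial.C μ) := by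
    rw [h1, ← Finset.mul_prod_erase _ (fun μ => Polynomial.X - Polynomial.C μ) h1mem]
  have h3 : (∑ i ∈ Finset.range n, (Polynomial.X : Polynomial ℂ) ^ i) * (Polynomial.X - 1)
      = (Polynomial.X : Polynomial ℂ) ^ n - 1 := geom_sum_mul _ n
  have h4 : (∑ i ∈ Finset.range n, (Polynomial.X : Polynomial ℂ) ^ i)
      = ∏ μ ∈ (Polynomial.nthRootsFinset n (1 : ℂ)).erase 1, (Polynomial.X - Polynomial.C μ) := by
    have hX1 : (Polynomial.X - 1 : Polynomial ℂ) ≠ 0 := by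
      simpa using Polynomial.X_sub_C_ne_zero (1 : ℂ)
    apply mul_right_cancel₀ hX1
    rw [h3, h2]
    rw [Polynomial.C_1]
    ring
  -- evaluate at 1
  have h5 := congrArg (Polynomial.eval 1) h4
  rw [Polynomial.eval_finset_sum, Polynomial.eval_prod] at h5
  simp only [Polynomial.eval_pow, Polynomial.eval_X, one_pow, Polynomial.eval_sub,
    Polynomial.eval_C, Finset.sum_const, Finset.card_range, nsmul_eq_mul, mul_one] at h5
  -- reindex
  have h6 : ∏ μ ∈ (Polynomial.nthRootsFinset n (1 : ℂ)).erase 1, ((1:ℂ) - μ)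
      = ∏ i ∈ Finset.Icc 1 (n-1), ((1 : ℂ) - zetaN n ^ i) := by
    refine (Finset.prod_bij (fun i _ => zetaN n ^ i) ?_ ?_ ?_ ?_).symm
    · intro i hi
      rw [Finset.mem_Icc] at hi
      rw [Finset.mem_erase, Polynomial.mem_nthRootsFinset hpos]
      refine ⟨hζ.pow_ne_one_of_pos_of_lt (by omega) (by omega), ?_⟩
      rw [← pow_mul, mul_comm i n, pow_mul, hζ.pow_eq_one, one_pow]
    · intro i hi j hj hij
      rw [Finset.mem_Icc] at hi hj
      exact hζ.pow_inj (by omega) (by omega) hij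
    · intro μ hμ
      rw [Finset.mem_erase, Polynomial.mem_nthRootsFinset hpos] at hμ
      haveI : NeZero n := ⟨by omega⟩
      obtain ⟨i, hi, rfl⟩ := hζ.eq_pow_of_pow_eq_one hμ.2
      have hi0 : i ≠ 0 := by
        rintro rfl
        exact hμ.1 (by simp)
      exact ⟨i, Finset.mem_Icc.mpr ⟨by omega, by omega⟩, rfl⟩
    · intro i hi; rfl
  rw [h6] at h5
  exact h5.symm

section P5

variable {f g h h' : ℕ → ℂ} {U : Finset ℕ} {a b c : ℤ}

lemma D1_empty : D1 h ∅ c = if c = 0 then 1 else 0 := by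
  by_cases hc : c = 0
  · subst hc; rw [D1_zero, if_pos rfl]
  · rw [if_neg hc, D1, PC_empty hc]; simp

lemma D2_zero_right : D2 g h U b 0 = D1 g U b := by
  rw [D2, D1]
  refine Finset.sum_congr rfl fun B _ => ?_
  rw [D1_zero, mul_one]

lemma D3_zero_right : D3 f g h U a b 0 = D2 f g U a b := by
  rw [D3, D2]
  refine Finset.sum_congr rfl fun A _ => ?_
  rw [D2_zero_right]

lemma D3_zero_left : D3 f g h U 0 b c = D2 g h U b c := by
  rw [D3, PC_zero]
  simp only [Finset.sum_singleton, Finset.prod_empty, one_mul, Finset.sdiff_empty]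

lemma D3_shift : D3 f g h U 0 b c = D3 g h h' U b c 0 := by
  rw [D3_zero_left, D3_zero_right]

lemma sum_shift (u w v : ℕ → ℂ) (K : ℕ) (m l : ℤ) (hl : l < K) :
    ∑ k ∈ Finset.range K, D3 u w v U (m - k) ((k : ℤ) - 1) (l - k)
      = ∑ k ∈ Finset.range K, D3 u w v U ((m-1) - k) k ((l-1) - k) := by
  cases K with
  | zero => simp
  | succ K' =>
    rw [Finset.sum_range_succ', Finset.sum_range_succ]
    have e : ∀ k : ℕ, D3 u w v U (m - (↑(k+1) : ℤ)) ((↑(k+1) : ℤ) - 1) (l - (↑(k+1) : ℤ))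
        = D3 u w v U ((m-1) - k) k ((l-1) - k) := by
      intro k
      congr 1 <;> push_cast <;> ring
    rw [Finset.sum_congr rfl fun k _ => e k]
    rw [D3_neg (Or.inr (Or.inl (by norm_num))),
        D3_neg (Or.inr (Or.inr (by push_cast; omega)))]

lemma prodC (u v w : ℕ → ℂ) (hw : ∀ i, w i = u i * v i) (U : Finset ℕ) (K : ℕ) :
    ∀ m l : ℤ, l < K →
      D1 u U m * D1 v U l = ∑ k ∈ Finset.range K, D3 u w v U (m - k) k (l - k) := by
  induction U using Finset.induction_on with
  | empty =>
    intro m l hl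
    rw [D1_empty, D1_empty]
    by_cases hml : m = 0 ∧ l = 0
    · obtain ⟨rfl, rfl⟩ := hml
      rw [Finset.sum_eq_single_of_mem 0 (Finset.mem_range.mpr (by omega))]
      · rw [D3_empty, if_pos (by norm_num)]; norm_num
      · intro k _ hk
        rw [D3_empty, if_neg]
        rintro ⟨-, hk2, -⟩
        exact hk (by exact_mod_cast hk2)
    · rw [Finset.sum_eq_zero, ]
      · rcases not_and_or.mp hml with hm | hl'
        · rw [if_neg hm, zero_mul]
        · rw [if_neg hl', mul_zero]
      · intro k _
        rw [D3_empty, if_neg]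
        rintro ⟨h1, h2, h3⟩
        exact hml ⟨by omega, by omega⟩
  | insert x U hx IH =>
    intro m l hl
    have e1 : ∀ k ∈ Finset.range K, D3 u w v (insert x U) (m - k) k (l - k)
        = u x * D3 u w v U ((m-1) - k) k (l - k)
          + w x * D3 u w v U (m - k) ((k:ℤ) - 1) (l - k)
          + v x * D3 u w v U (m - k) k ((l-1) - k)
          + D3 u w v U (m - k) k (l - k) := by
      intro k _
      rw [D3_insert hx]
      rw [show (m - k - 1 : ℤ) = (m-1) - k from by ring,
          show (l - k - 1 : ℤ) = (l-1) - k from by ring]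
    rw [Finset.sum_congr rfl e1]
    rw [Finset.sum_add_distrib, Finset.sum_add_distrib, Finset.sum_add_distrib,
        ← Finset.mul_sum, ← Finset.mul_sum, ← Finset.mul_sum]
    rw [sum_shift u w v K m l hl]
    rw [← IH (m-1) l hl, ← IH (m-1) (l-1) (by omega), ← IH m (l-1) (by omega), ← IH m l hl]
    rw [D1_insert hx, D1_insert hx, hw x]
    ring

lemma complD3 (w v : ℕ → ℂ) (U : Finset ℕ) (hv : ∀ i ∈ U, w i * v i = 1) :
    ∀ a b c : ℤ,
      (∏ i ∈ U, v i) * D3 (fun i => w i ^ 3) (fun i => w i ^ 2) w U a b c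
        = D3 (fun i => w i ^ 2) w v U a b ((U.card : ℤ) - a - b - c) := by
  induction U using Finset.induction_on with
  | empty =>
    intro a b c
    rw [Finset.prod_empty, one_mul, D3_empty, D3_empty]
    by_cases habc : a = 0 ∧ b = 0 ∧ c = 0
    · rw [if_pos habc, if_pos]
      simp only [Finset.card_empty, Nat.cast_zero]
      exact ⟨habc.1, habc.2.1, by omega⟩
    · rw [if_neg habc, if_neg]
      simp only [Finset.card_empty, Nat.cast_zero]
      rintro ⟨h1, h2, h3⟩
      exact habc ⟨h1, h2, by omega⟩
  | insert x U hx IH =>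
    have hvx : w x * v x = 1 := hv x (Finset.mem_insert_self x U)
    have hvU : ∀ i ∈ U, w i * v i = 1 := fun i hi => hv i (Finset.mem_insert_of_mem hi)
    have IH' := IH hvU
    intro a b c
    rw [Finset.prod_insert hx, D3_insert hx, D3_insert hx]
    have hcard : ((insert x U).card : ℤ) = (U.card : ℤ) + 1 := by
      rw [Finset.card_insert_of_notMem hx]; push_cast; ring
    have t1 : D3 (fun i => w i ^ 2) w v U (a-1) b (((insert x U).card : ℤ) - a - b - c)
        = (∏ i ∈ U, v i) * D3 (fun i => w i ^ 3) (fun i => w i ^ 2) w U (a-1) b c := by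
      rw [show ((insert x U).card : ℤ) - a - b - c = (U.card : ℤ) - (a-1) - b - c from by
        rw [hcard]; ring]
      exact (IH' (a-1) b c).symm
    have t2 : D3 (fun i => w i ^ 2) w v U a (b-1) (((insert x U).card : ℤ) - a - b - c)
        = (∏ i ∈ U, v i) * D3 (fun i => w i ^ 3) (fun i => w i ^ 2) w U a (b-1) c := by
      rw [show ((insert x U).card : ℤ) - a - b - c = (U.card : ℤ) - a - (b-1) - c from by
        rw [hcard]; ring]
      exact (IH' a (b-1) c).symm
    have t3 : D3 (fun i => w i ^ 2) w v U a b (((insert x U).card : ℤ) - a - b - c - 1)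
        = (∏ i ∈ U, v i) * D3 (fun i => w i ^ 3) (fun i => w i ^ 2) w U a b c := by
      rw [show ((insert x U).card : ℤ) - a - b - c - 1 = (U.card : ℤ) - a - b - c from by
        rw [hcard]; ring]
      exact (IH' a b c).symm
    have t4 : D3 (fun i => w i ^ 2) w v U a b (((insert x U).card : ℤ) - a - b - c)
        = (∏ i ∈ U, v i) * D3 (fun i => w i ^ 3) (fun i => w i ^ 2) w U a b (c-1) := by
      rw [show ((insert x U).card : ℤ) - a - b - c = (U.card : ℤ) - a - b - (c-1) from by
        rw [hcard]; ring]
      exact (IH' a b (c-1)).symm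
    rw [t1, t2, t3, t4]
    linear_combination ((∏ i ∈ U, v i) *
      (D3 (fun i => w i ^ 3) (fun i => w i ^ 2) w U (a-1) b c * w x ^ 2
        + D3 (fun i => w i ^ 3) (fun i => w i ^ 2) w U a (b-1) c * w x
        + D3 (fun i => w i ^ 3) (fun i => w i ^ 2) w U a b (c-1))) * hvx

end P5

section P6

/-- The basic building-block function `i ↦ (1 - ζ_n^i)^(-e)`. -/
noncomputable def Fz (n : ℕ) (e : ℤ) : ℕ → ℂ := fun i => (1 - zetaN n ^ i) ^ (-e)

noncomputable def YD (n : ℕ) (S : Finset ℕ) (a b c : ℤ) : ℂ :=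
  ∑ σ ∈ PermF a b c, ∑ t ∈ S.powersetCard σ.length,
    (List.zipWith (fun i e => (1 - zetaN n ^ i) ^ (-e)) (t.sort (· ≤ ·)) σ).prod

lemma PermF_neg {a b c : ℤ} (h : ¬(0 ≤ a ∧ 0 ≤ b ∧ 0 ≤ c)) : PermF a b c = ∅ := by
  unfold PermF; rw [if_neg h]

lemma YD_neg {n : ℕ} {S : Finset ℕ} {a b c : ℤ} (h : ¬(0 ≤ a ∧ 0 ≤ b ∧ 0 ≤ c)) :
    YD n S a b c = 0 := by
  rw [YD, PermF_neg h, Finset.sum_empty]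

lemma PermF_zero : PermF 0 0 0 = {([] : List ℤ)} := by
  unfold PermF
  rw [if_pos ⟨le_rfl, le_rfl, le_rfl⟩]
  ext σ
  simp [LL, List.mem_permutations, List.perm_nil]

lemma len_PermF {σ : List ℤ} {a b c : ℤ} (h : σ ∈ PermF a b c) :
    σ.length = a.toNat + b.toNat + c.toNat := by
  rw [mem_PermF] at h
  have := card_MS a b c
  rw [← h.2, Multiset.coe_card] at this
  omega

lemma YD_zero {n : ℕ} {S : Finset ℕ} : YD n S 0 0 0 = 1 := by
  rw [YD, PermF_zero, Finset.sum_singleton]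
  simp only [List.length_nil, Finset.powersetCard_zero, Finset.sum_singleton]
  simp

/-- Uniform-exponent form of `YD`. -/
lemma YD_card {n : ℕ} {S : Finset ℕ} {a b c : ℤ} :
    YD n S a b c
      = ∑ σ ∈ PermF a b c, ∑ t ∈ S.powersetCard (a.toNat + b.toNat + c.toNat),
          (List.zipWith (fun i e => (1 - zetaN n ^ i) ^ (-e)) (t.sort (· ≤ ·)) σ).prod := by
  rw [YD]
  exact Finset.sum_congr rfl fun σ hσ => by rw [len_PermF hσ]

lemma YD_eq_D3 (n : ℕ) (S : Finset ℕ) :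
    ∀ a b c : ℤ, YD n S a b c = D3 (Fz n 3) (Fz n 2) (Fz n 1) S a b c := by
  induction S using Finset.induction_on_min with
  | empty =>
    intro a b c
    by_cases h : 0 ≤ a ∧ 0 ≤ b ∧ 0 ≤ c
    · obtain ⟨ha, hb, hc⟩ := h
      by_cases hsum : a + b + c = 0
      · have ha0 : a = 0 := by omega
        have hb0 : b = 0 := by omega
        have hc0 : c = 0 := by omega
        subst ha0; subst hb0; subst hc0
        rw [YD_zero, D3_empty, if_pos ⟨rfl, rfl, rfl⟩]
      · rw [D3_empty, if_neg (by omega)]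
        rw [YD]
        refine Finset.sum_eq_zero fun σ hσ => ?_
        have hlen := len_PermF hσ
        have : (∅ : Finset ℕ).powersetCard σ.length = ∅ := by
          rw [Finset.powersetCard_eq_empty]
          simp only [Finset.card_empty]
          omega
        rw [this, Finset.sum_empty]
    · rw [YD_neg h, D3_neg (by omega)]
  | insert x S hlt IH =>
    have hx : x ∉ S := fun h => lt_irrefl x (hlt x h)
    intro a b c
    by_cases h : 0 ≤ a ∧ 0 ≤ b ∧ 0 ≤ c
    swap
    · rw [YD_neg h, D3_neg (by omega)]
    obtain ⟨ha, hb, hc⟩ := h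
    by_cases hsum : a + b + c = 0
    · have ha0 : a = 0 := by omega
      have hb0 : b = 0 := by omega
      have hc0 : c = 0 := by omega
      subst ha0; subst hb0; subst hc0
      rw [YD_zero, D3_zero]
    -- main case
    have hN : 1 ≤ a.toNat + b.toNat + c.toNat := by omega
    set N : ℕ := a.toNat + b.toNat + c.toNat with hNdef
    -- split each inner sum
    have split1 : ∀ σ ∈ PermF a b c,
        (∑ t ∈ (insert x S).powersetCard σ.length,
          (List.zipWith (fun i e => (1 - zetaN n ^ i) ^ (-e)) (t.sort (· ≤ ·)) σ).prod)
        = (∑ t ∈ S.powersetCard σ.length,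
            (List.zipWith (fun i e => (1 - zetaN n ^ i) ^ (-e)) (t.sort (· ≤ ·)) σ).prod)
          + (∑ t ∈ S.powersetCard (N - 1),
              (List.zipWith (fun i e => (1 - zetaN n ^ i) ^ (-e))
                ((insert x t).sort (· ≤ ·)) σ).prod) := by
      intro σ hσ
      have hlen : σ.length = N := len_PermF hσ
      have e := sum_powersetCard_succ hx (N-1) (fun t =>
        (List.zipWith (fun i e => (1 - zetaN n ^ i) ^ (-e)) (t.sort (· ≤ ·)) σ).prod)
      rw [show N - 1 + 1 = N from by omega] at e
      rw [hlen, e]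
    rw [YD, Finset.sum_congr rfl split1, Finset.sum_add_distrib]
    have part1 : (∑ σ ∈ PermF a b c, ∑ t ∈ S.powersetCard σ.length,
        (List.zipWith (fun i e => (1 - zetaN n ^ i) ^ (-e)) (t.sort (· ≤ ·)) σ).prod)
        = YD n S a b c := by rw [YD]
    rw [part1]
    -- second part: use permSplit
    have hsortins : ∀ t ∈ S.powersetCard (N - 1), (insert x t).sort (· ≤ ·)
        = x :: t.sort (· ≤ ·) := by
      intro t ht
      rw [Finset.mem_powersetCard] at ht
      refine Finset.sort_insert _ (fun b hb => le_of_lt (hlt b (ht.1 hb))) ?_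
      exact fun hmem => hx (ht.1 hmem)
    have branch : ∀ (e : ℤ) (a' b' c' : ℤ),
        (0 ≤ a' ∧ 0 ≤ b' ∧ 0 ≤ c' → a'.toNat + b'.toNat + c'.toNat = N - 1) →
        (∑ σ ∈ PermF a' b' c', ∑ t ∈ S.powersetCard (N - 1),
          (List.zipWith (fun i e => (1 - zetaN n ^ i) ^ (-e))
            ((insert x t).sort (· ≤ ·)) (e :: σ)).prod)
        = Fz n e x * YD n S a' b' c' := by
      intro e a' b' c' hlen
      by_cases hg : 0 ≤ a' ∧ 0 ≤ b' ∧ 0 ≤ c'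
      · rw [YD_card]
        rw [Finset.mul_sum]
        rw [show a'.toNat + b'.toNat + c'.toNat = N - 1 from hlen hg]
        refine Finset.sum_congr rfl fun σ hσ => ?_
        rw [Finset.mul_sum]
        refine Finset.sum_congr rfl fun t ht => ?_
        rw [hsortins t ht]
        simp only [List.zipWith_cons_cons, List.prod_cons]
        rfl
      · rw [PermF_neg hg, Finset.sum_empty, YD_neg hg, mul_zero]
    rw [permSplit ha hb hc (by omega) _]
    rw [branch 3 (a-1) b c (fun hg => by omega),
        branch 2 a (b-1) c (fun hg => by omega),
        branch 1 a b (c-1) (fun hg => by omega)]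
    rw [IH a b c, IH (a-1) b c, IH a (b-1) c, IH a b (c-1), D3_insert hx]
    ring

end P6

section P7

lemma PC_natCast (U : Finset ℕ) (k : ℕ) : PC U (k : ℤ) = U.powersetCard k := by
  unfold PC
  rw [if_pos (Int.natCast_nonneg k)]
  simp

lemma zip_repl (f : ℕ → ℤ → ℂ) (e : ℤ) :
    ∀ l : List ℕ, List.zipWith f l (List.replicate l.length e) = l.map (fun i => f i e) := by
  intro l
  induction l with
  | nil => rfl
  | cons h t IH => simp [List.replicate_succ, IH]

lemma prod_sort_map (g : ℕ → ℂ) (t : Finset ℕ) :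
    ((t.sort (· ≤ ·)).map g).prod = ∏ i ∈ t, g i := by
  have h1 : ((t.sort (· ≤ ·)).map g).prod = (Multiset.map g ↑(t.sort (· ≤ ·))).prod := rfl
  rw [h1, Finset.sort_eq, Finset.prod_eq_multiset_prod]

lemma qhs_repl (n : ℕ) (m : ℕ) (e : ℤ) :
    qhs n (List.replicate m e) = D1 (Fz n e) (Finset.Icc 1 (n-1)) (m : ℤ) := by
  rw [qhs, D1, PC_natCast, List.length_replicate]
  refine Finset.sum_congr rfl fun t ht => ?_
  rw [Finset.mem_powersetCard] at ht
  have hlen : (t.sort (· ≤ ·)).length = m := by rw [Finset.length_sort, ht.2]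
  rw [← hlen, zip_repl, prod_sort_map]
  rfl

lemma Y3_eq (n : ℕ) (a b c : ℤ) :
    Y3 n a b c = D3 (Fz n 3) (Fz n 2) (Fz n 1) (Finset.Icc 1 (n-1)) a b c := by
  rw [Y3]
  split_ifs with h
  · rw [← YD_eq_D3, Yperm, YD]
    unfold PermF
    rw [if_pos h]
    rfl
  · rw [D3_neg (by omega)]

noncomputable def gD (n m ℓ : ℕ) (d : ℕ) : ℂ :=
  D3 (Fz n 2) (Fz n 1) (Fz n (-1)) (Finset.Icc 1 (n-1))
    ((m:ℤ) - ℓ + d) ((ℓ:ℤ) - d) (d : ℤ)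

end P7

theorem stmt6 (n m ℓ : ℕ) (hn : 2 ≤ n) (hm : m ≤ n - 1) (hℓ : ℓ ≤ m) :
    qhs n (List.replicate m 2) * qhs n (List.replicate ℓ (-1))
      = Y3 n 0 ((m : ℤ) - ℓ) (ℓ : ℤ)
        + (n : ℂ) * ∑ j ∈ Finset.range (n - m - 1),
            Y3 n ((m : ℤ) - ℓ + 1 + j) ((ℓ : ℤ) - 1 - j) ((n : ℤ) - m - 2 - j) := by
  have hw : ∀ i, Fz n 1 i = Fz n 2 i * Fz n (-1) i := by
    intro i
    by_cases hz : (1 : ℂ) - zetaN n ^ i = 0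
    · simp [Fz, hz, zero_zpow]
    · show (1 - zetaN n ^ i) ^ (-(1:ℤ)) = (1 - zetaN n ^ i) ^ (-(2:ℤ)) * (1 - zetaN n ^ i) ^ (-(-1:ℤ))
      rw [← zpow_add₀ hz]
      norm_num
  have hcardS : (Finset.Icc 1 (n-1)).card = n - 1 := by
    rw [Nat.card_Icc]; omega
  -- LHS
  have hLHS : qhs n (List.replicate m 2) * qhs n (List.replicate ℓ (-1))
      = ∑ k ∈ Finset.range (ℓ+1),
          D3 (Fz n 2) (Fz n 1) (Fz n (-1)) (Finset.Icc 1 (n-1))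
            ((m:ℤ) - k) (k:ℤ) ((ℓ:ℤ) - k) := by
    rw [qhs_repl, qhs_repl]
    exact prodC (Fz n 2) (Fz n (-1)) (Fz n 1) hw (Finset.Icc 1 (n-1)) (ℓ+1)
      (m : ℤ) (ℓ : ℤ) (by push_cast; omega)
  -- reflect
  have hrefl : (∑ k ∈ Finset.range (ℓ+1),
        D3 (Fz n 2) (Fz n 1) (Fz n (-1)) (Finset.Icc 1 (n-1))
          ((m:ℤ) - k) (k:ℤ) ((ℓ:ℤ) - k))
      = ∑ d ∈ Finset.range (ℓ+1), gD n m ℓ d := by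
    rw [← Finset.sum_range_reflect
      (fun k => D3 (Fz n 2) (Fz n 1) (Fz n (-1)) (Finset.Icc 1 (n-1))
        ((m:ℤ) - k) (k:ℤ) ((ℓ:ℤ) - k)) (ℓ+1)]
    refine Finset.sum_congr rfl fun j hj => ?_
    rw [Finset.mem_range] at hj
    have hj' : j ≤ ℓ := by omega
    have e0 : ℓ + 1 - 1 - j = ℓ - j := by omega
    rw [e0, Nat.cast_sub hj']
    rw [show ((m:ℤ) - ((ℓ:ℤ) - (j:ℤ))) = (m:ℤ) - ℓ + j from by ring,
        show ((ℓ:ℤ) - ((ℓ:ℤ) - (j:ℤ))) = (j:ℤ) from by ring]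
    rfl
  -- function power identities
  have hf3 : Fz n 3 = fun i => Fz n 1 i ^ 3 := by
    funext i
    show (1 - zetaN n ^ i) ^ (-(3:ℤ)) = ((1 - zetaN n ^ i) ^ (-(1:ℤ)))^3
    rw [zpow_neg, zpow_neg, zpow_one, inv_pow]
    norm_cast
  have hf2 : Fz n 2 = fun i => Fz n 1 i ^ 2 := by
    funext i
    show (1 - zetaN n ^ i) ^ (-(2:ℤ)) = ((1 - zetaN n ^ i) ^ (-(1:ℤ)))^2
    rw [zpow_neg, zpow_neg, zpow_one, inv_pow]
    norm_cast
  have hv : ∀ i ∈ Finset.Icc 1 (n-1), Fz n 1 i * Fz n (-1) i = 1 := by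
    intro i hi
    have hz := one_sub_zetaN_ne hn hi
    show (1 - zetaN n ^ i) ^ (-(1:ℤ)) * (1 - zetaN n ^ i) ^ (-(-1:ℤ)) = 1
    rw [← zpow_add₀ hz]
    norm_num
  have hprodv : (∏ i ∈ Finset.Icc 1 (n-1), Fz n (-1) i) = (n : ℂ) := by
    rw [← prod_one_sub_zetaN hn]
    refine Finset.prod_congr rfl fun i _ => ?_
    show (1 - zetaN n ^ i) ^ (-(-1:ℤ)) = 1 - zetaN n ^ i
    norm_num
  -- the key complement identity
  have hcompl : ∀ A B C : ℤ,
      (n : ℂ) * D3 (Fz n 3) (Fz n 2) (Fz n 1) (Finset.Icc 1 (n-1)) A B C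
        = D3 (Fz n 2) (Fz n 1) (Fz n (-1)) (Finset.Icc 1 (n-1)) A B
            (((n:ℤ) - 1) - A - B - C) := by
    intro A B C
    have := complD3 (Fz n 1) (Fz n (-1)) (Finset.Icc 1 (n-1)) hv A B C
    rw [hprodv] at this
    rw [← hf3, ← hf2] at this
    rw [this, hcardS]
    congr 1
    push_cast [Nat.cast_sub (by omega : 1 ≤ n)]
    ring
  -- rewrite RHS
  have hY0 : Y3 n 0 ((m : ℤ) - ℓ) (ℓ : ℤ) = gD n m ℓ 0 := by
    rw [Y3_eq, D3_shift (h' := Fz n (-1))]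
    unfold gD
    norm_num
  have hYj : ∀ j ∈ Finset.range (n - m - 1),
      (n : ℂ) * Y3 n ((m : ℤ) - ℓ + 1 + j) ((ℓ : ℤ) - 1 - j) ((n : ℤ) - m - 2 - j)
        = gD n m ℓ (j+1) := by
    intro j hj
    rw [Y3_eq, hcompl]
    unfold gD
    rw [show ((n:ℤ) - 1) - ((m:ℤ) - ℓ + 1 + j) - ((ℓ:ℤ) - 1 - j) - ((n:ℤ) - m - 2 - j)
        = ((j:ℤ) + 1) from by ring]
    rw [show ((m:ℤ) - ℓ + ((j:ℕ)+1 : ℕ)) = (m:ℤ) - ℓ + 1 + j from by push_cast; ring,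
        show ((ℓ:ℤ) - ((j:ℕ)+1 : ℕ)) = (ℓ:ℤ) - 1 - j from by push_cast; ring,
        show (((j:ℕ)+1 : ℕ) : ℤ) = (j:ℤ) + 1 from by push_cast; ring]
  have hRHS : Y3 n 0 ((m : ℤ) - ℓ) (ℓ : ℤ)
        + (n : ℂ) * ∑ j ∈ Finset.range (n - m - 1),
            Y3 n ((m : ℤ) - ℓ + 1 + j) ((ℓ : ℤ) - 1 - j) ((n : ℤ) - m - 2 - j)
      = ∑ d ∈ Finset.range (n - m), gD n m ℓ d := by
    rw [Finset.mul_sum, Finset.sum_congr rfl hYj, hY0]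
    rw [show n - m = (n - m - 1) + 1 from by omega, Finset.sum_range_succ']
    rw [show n - m - 1 + 1 - 1 = n - m - 1 from by omega]
    ring
  -- vanishing of gD
  have hvan : ∀ d : ℕ, (ℓ + 1 ≤ d ∨ n - m ≤ d) → gD n m ℓ d = 0 := by
    intro d hd
    rcases hd with hd | hd
    · exact D3_neg (Or.inr (Or.inl (by push_cast; omega)))
    · apply D3_card_lt
      rw [hcardS]
      push_cast [Nat.cast_sub (by omega : 1 ≤ n)]
      omega
  -- extend both to a common range
  have hext : ∀ P : ℕ, P ≤ max (ℓ+1) (n-m) → (∀ d, P ≤ d → gD n m ℓ d = 0) →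
      ∑ d ∈ Finset.range P, gD n m ℓ d = ∑ d ∈ Finset.range (max (ℓ+1) (n-m)), gD n m ℓ d := by
    intro P hP hz
    refine Finset.sum_subset (Finset.range_subset_range.mpr hP) fun d _ hd => ?_
    rw [Finset.mem_range, not_lt] at hd
    exact hz d hd
  rw [hLHS, hrefl, hRHS]
  rw [hext (ℓ+1) (le_max_left _ _) (fun d hd => hvan d (Or.inl hd)),
      hext (n-m) (le_max_right _ _) (fun d hd => hvan d (Or.inr hd))]
end

section
/- Let n, m, ℓ be positive integers with n ≥ 2 and m ≥ ℓ. Then Σ_{j=0}^{n−m−1} C(m−ℓ+2j, j) · 𝒴_n(2^{ℓ−j}, 1^{m−ℓ+2j}) = (1/((m+1)(ℓ+1))) · C(n−1, m) · C(n−1, ℓ). -/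
open Finset

/-! ### Auxiliary machinery -/

open Polynomial

noncomputable def uu (n i : ℕ) : ℂ := (1 - zetaN n ^ i)⁻¹

noncomputable def vv (n : ℕ) (i : ℕ) (e : ℤ) : ℂ := (1 - zetaN n ^ i) ^ (-e)

lemma zeta_prim {n : ℕ} (hn : 1 ≤ n) : IsPrimitiveRoot (zetaN n) n :=
  Complex.isPrimitiveRoot_exp n (by omega)

lemma one_sub_zeta_ne {n : ℕ} (hn : 2 ≤ n) {i : ℕ} (hi : i ∈ Finset.Icc 1 (n-1)) :
    1 - zetaN n ^ i ≠ 0 := by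
  simp only [Finset.mem_Icc] at hi
  intro h
  have h1 : zetaN n ^ i = 1 := by linear_combination -h
  have h2 : n ∣ i := (zeta_prim (by omega : 1 ≤ n)).pow_eq_one_iff_dvd i |>.mp h1
  have h3 : n ≤ i := Nat.le_of_dvd (by omega) h2
  omega

lemma uu_injOn {n : ℕ} (hn : 2 ≤ n) : Set.InjOn (uu n) (Finset.Icc 1 (n-1) : Finset ℕ) := by
  intro i hi j hj h
  simp only [Finset.coe_Icc, Set.mem_Icc] at hi hj
  have hzi : zetaN n ^ i = zetaN n ^ j := by
    have h2 := inv_injective h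
    linear_combination -h2
  exact (zeta_prim (by omega : 1 ≤ n)).pow_inj (by omega) (by omega) hzi

lemma Gcoeff {n : ℕ} (k : ℕ) :
    (((X - 1 : ℂ[X]))^n - X^n).coeff k
      = (-1 : ℂ)^(n-k) * (n.choose k) - (if n = k then 1 else 0) := by
  have h1 : (X - 1 : ℂ[X]) = X + C (-1) := by simp [sub_eq_add_neg]
  rw [coeff_sub, h1, coeff_X_add_C_pow, coeff_X_pow]
  simp [eq_comm]

lemma prod_eq {n : ℕ} (hn : 2 ≤ n) :
    C (-(n:ℂ)) * ∏ i ∈ Finset.Icc 1 (n-1), (X - C (uu n i)) =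
      ((X - 1 : ℂ[X])^n - X^n) := by
  set S := Finset.Icc 1 (n-1) with hS
  have hScard : #S = n - 1 := by rw [hS, Nat.card_Icc]; omega
  set P : ℂ[X] := ∏ i ∈ S, (X - C (uu n i)) with hP
  have hPm : P.Monic := monic_prod_of_monic _ _ (fun i _ => monic_X_sub_C _)
  have hPdeg : P.natDegree = n - 1 := by
    rw [hP, natDegree_prod_of_monic _ _ (fun i _ => monic_X_sub_C _)]
    simp [hScard]
  set G : ℂ[X] := (X - 1 : ℂ[X])^n - X^n with hG
  set D : ℂ[X] := C (-(n:ℂ)) * P - G with hD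
  suffices hD0 : D = 0 by
    have := sub_eq_zero.mp hD0
    exact this
  rcases eq_or_ne D 0 with h0 | h0
  · exact h0
  have hcoeff : ∀ k, n - 1 ≤ k → D.coeff k = 0 := by
    intro k hk
    rcases eq_or_lt_of_le hk with hk1 | hk1
    · have hkk : k = n - 1 := hk1.symm
      subst hkk
      rw [hD, coeff_sub, coeff_C_mul, Gcoeff]
      have h2 : P.coeff (n-1) = 1 := by
        have := hPm.coeff_natDegree
        rwa [hPdeg] at this
      have h3 : n - (n-1) = 1 := by omega
      have h4 : n.choose (n-1) = n := by
        have h5 := Nat.choose_symm (show 1 ≤ n by omega)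
        rw [h5, Nat.choose_one_right]
      rw [h2, h3, h4, if_neg (by omega : ¬ n = n - 1)]
      ring
    · have hPk : P.coeff k = 0 := coeff_eq_zero_of_natDegree_lt (by omega)
      rw [hD, coeff_sub, coeff_C_mul, hPk, Gcoeff, mul_zero]
      rcases eq_or_lt_of_le (show n ≤ k by omega) with h5 | h5
      · subst h5
        simp
      · rw [if_neg (by omega), Nat.choose_eq_zero_of_lt h5]
        simp
  have hdeg : D.natDegree < n - 1 := by
    rw [natDegree_lt_iff_degree_lt h0]
    rw [degree_lt_iff_coeff_zero]
    intro m hm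
    exact hcoeff m (by exact_mod_cast hm)
  have heval : ∀ x ∈ Finset.image (uu n) S, D.eval x = 0 := by
    rintro x hx
    simp only [Finset.mem_image] at hx
    obtain ⟨i, hi, rfl⟩ := hx
    have hPe : P.eval (uu n i) = 0 := by
      rw [hP, eval_prod]
      exact Finset.prod_eq_zero hi (by simp)
    have hGe : G.eval (uu n i) = 0 := by
      have hne := one_sub_zeta_ne hn hi
      have hu : uu n i - 1 = zetaN n ^ i * uu n i := by
        rw [uu]
        field_simp
        ring
      have hzn : (zetaN n) ^ n = 1 := (zeta_prim (by omega : 1 ≤ n)).pow_eq_one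
      rw [hG]
      simp only [eval_sub, eval_pow, eval_X, eval_one]
      rw [hu, mul_pow, ← pow_mul, mul_comm i n, pow_mul, hzn, one_pow, one_mul, sub_self]
    rw [hD]
    simp [hPe, hGe]
  have hcard : D.natDegree < #(Finset.image (uu n) S) := by
    rw [Finset.card_image_of_injOn (uu_injOn hn), hScard]
    exact hdeg
  exact Polynomial.eq_zero_of_natDegree_lt_card_of_eval_eq_zero' D _ heval hcard

lemma esymm_uu {n : ℕ} (hn : 2 ≤ n) (m : ℕ) :
    ∑ t ∈ (Finset.Icc 1 (n-1)).powersetCard m, ∏ i ∈ t, uu n i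
      = (n.choose (m+1) : ℂ) / n := by
  have hScard : #(Finset.Icc 1 (n-1)) = n - 1 := by rw [Nat.card_Icc]; omega
  rcases le_or_gt m (n-1) with hm | hm
  · have hpe := prod_eq hn
    have hconv : (∏ i ∈ Finset.Icc 1 (n-1), (X - C (uu n i)))
        = ∏ i ∈ Finset.Icc 1 (n-1), (X + C (-(uu n i))) := by
      refine Finset.prod_congr rfl fun i _ => ?_
      rw [map_neg, sub_eq_add_neg]
    rw [hconv] at hpe
    have hk : n - 1 - m ≤ #(Finset.Icc 1 (n-1)) := by omega
    have hL := Finset.prod_X_add_C_coeff (Finset.Icc 1 (n-1)) (fun i => -(uu n i)) hk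
    rw [hScard, (by omega : (n-1) - (n-1-m) = m)] at hL
    have hE := congrArg (fun p => p.coeff (n-1-m)) hpe
    simp only [coeff_C_mul] at hE
    rw [hL, Gcoeff, (by omega : n - (n-1-m) = m+1),
      if_neg (by omega : ¬ n = n-1-m)] at hE
    have hsym : n.choose (n-1-m) = n.choose (m+1) := by
      rw [(by omega : n-1-m = n - (m+1)), Nat.choose_symm (by omega : m+1 ≤ n)]
    rw [hsym] at hE
    have hsgn : ∑ t ∈ (Finset.Icc 1 (n-1)).powersetCard m, ∏ i ∈ t, -(uu n i)
        = (-1:ℂ)^m * ∑ t ∈ (Finset.Icc 1 (n-1)).powersetCard m, ∏ i ∈ t, uu n i := by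
      rw [Finset.mul_sum]
      refine Finset.sum_congr rfl fun t ht => ?_
      have hct : #t = m := (Finset.mem_powersetCard.mp ht).2
      calc ∏ i ∈ t, -(uu n i) = ∏ i ∈ t, ((-1) * uu n i) := by
            refine Finset.prod_congr rfl fun i _ => by ring
        _ = (-1:ℂ)^m * ∏ i ∈ t, uu n i := by
            rw [Finset.prod_mul_distrib, Finset.prod_const, hct]
    rw [hsgn, pow_succ] at hE
    have hne : (n:ℂ) ≠ 0 := Nat.cast_ne_zero.mpr (by omega)
    have h9 : (-1:ℂ)^m * ((n:ℂ) * ∑ t ∈ (Finset.Icc 1 (n-1)).powersetCard m, ∏ i ∈ t, uu n i)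
        = (-1:ℂ)^m * (n.choose (m+1) : ℂ) := by linear_combination -hE
    have h10 := mul_left_cancel₀ (pow_ne_zero m (by norm_num : (-1:ℂ) ≠ 0)) h9
    field_simp
    linear_combination h10
  · rw [Finset.powersetCard_eq_empty.mpr (by omega), Finset.sum_empty,
      Nat.choose_eq_zero_of_lt (by omega)]
    simp

lemma count_ofFn {N : ℕ} (f : Fin N → ℤ) (x : ℤ) :
    (List.ofFn f).count x = #(Finset.univ.filter (fun j => f j = x)) := by
  induction N with
  | zero => simp
  | succ N ih =>
    rw [List.ofFn_succ, List.count_cons, ih (fun j => f j.succ)]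
    rw [Finset.card_filter, Finset.card_filter, Fin.sum_univ_succ]
    simp [add_comm, beq_iff_eq]

lemma count_eq_card_filter_getD (x : ℤ) : ∀ (N : ℕ) (σ : List ℤ), σ.length = N →
    σ.count x = #(Finset.univ.filter (fun j : Fin N => σ.getD j.1 0 = x)) := by
  intro N
  induction N with
  | zero => intro σ h; rw [List.length_eq_zero_iff] at h; subst h; simp
  | succ N ih =>
    intro σ h
    match σ with
    | a :: σ' =>
      simp only [List.length_cons, Nat.succ.injEq] at h
      rw [List.count_cons, ih σ' h]
      rw [Finset.card_filter, Finset.card_filter, Fin.sum_univ_succ]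
      simp [add_comm, beq_iff_eq, List.getD_cons_succ, List.getD_cons_zero]

lemma prod_zipWith_ofFn {M : Type*} [CommMonoid M] {N : ℕ} (v : ℕ → ℤ → M)
    (g : Fin N → ℕ) (f : Fin N → ℤ) :
    (List.zipWith v (List.ofFn g) (List.ofFn f)).prod = ∏ j : Fin N, v (g j) (f j) := by
  induction N with
  | zero => simp
  | succ N ih =>
    rw [List.ofFn_succ, List.ofFn_succ, List.zipWith_cons_cons, List.prod_cons,
      ih (fun j => g j.succ) (fun j => f j.succ), Fin.prod_univ_succ]

lemma sort_eq_ofFn {t : Finset ℕ} {N : ℕ} (ht : #t = N) :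
    t.sort (· ≤ ·) = List.ofFn (fun j : Fin N => t.orderEmbOfFin ht j) := by
  apply List.ext_getElem
  · simp [Finset.length_sort, ht]
  · intro i h1 h2
    simp only [List.getElem_ofFn]
    rfl

/-- the word attached to a set of positions of 2's -/
def sigA {N : ℕ} (A : Finset (Fin N)) : List ℤ := List.ofFn (fun j => if j ∈ A then 2 else 1)

lemma permA {n b c : ℕ} :
    Yperm n (List.replicate b (2:ℤ) ++ List.replicate c 1)
      = ∑ A ∈ (Finset.univ : Finset (Fin (b+c))).powersetCard b, qhs n (sigA A) := by
  set L := List.replicate b (2:ℤ) ++ List.replicate c 1 with hL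
  rw [Yperm]
  have hli : ∀ σ ∈ L.permutations.toFinset,
      sigA (Finset.univ.filter (fun j : Fin (b+c) => σ.getD j.1 0 = 2)) = σ := by
    intro σ hσ
    rw [List.mem_toFinset, List.mem_permutations] at hσ
    have hlen : σ.length = b + c := by rw [hσ.length_eq, hL]; simp
    have hmem : ∀ x ∈ σ, x = 2 ∨ x = 1 := by
      intro x hx
      have := hσ.mem_iff.mp hx
      rw [hL] at this
      simp only [List.mem_append, List.mem_replicate] at this
      tauto
    simp only [sigA]
    apply List.ext_getElem
    · simp [hlen]
    · intro i h1 h2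
      simp only [List.getElem_ofFn, Finset.mem_filter, Finset.mem_univ, true_and]
      have hi : i < σ.length := by simp [List.length_ofFn] at h1; omega
      have hgd : σ.getD i 0 = σ[i] := List.getD_eq_getElem σ 0 hi
      rcases hmem σ[i] (List.getElem_mem hi) with h | h
      · rw [if_pos]; · exact h.symm
        · rw [hgd, h]
      · rw [if_neg]; · exact h.symm
        · rw [hgd, h]; norm_num
  refine Finset.sum_nbij' (i := fun σ => Finset.univ.filter (fun j : Fin (b+c) => σ.getD j.1 0 = 2))
    (j := fun A => sigA A) ?_ ?_ ?_ ?_ ?_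
  all_goals intro σ hσ
  · -- maps into powersetCard b univ
    rw [List.mem_toFinset, List.mem_permutations] at hσ
    have hlen : σ.length = b + c := by rw [hσ.length_eq, hL]; simp
    have hcount : σ.count 2 = b := by
      rw [hσ.count_eq, hL]
      simp [List.count_replicate]
    rw [Finset.mem_powersetCard]
    refine ⟨Finset.subset_univ _, ?_⟩
    rw [← count_eq_card_filter_getD 2 (b+c) σ hlen, hcount]
  · -- sigA A ∈ permutations
    rw [Finset.mem_powersetCard] at hσ
    rw [List.mem_toFinset, List.mem_permutations, List.perm_iff_count]
    intro x
    simp only [sigA]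
    rw [count_ofFn, hL, List.count_append, List.count_replicate, List.count_replicate]
    rcases eq_or_ne x 2 with rfl | hx2
    · have h1 : (Finset.univ.filter (fun j : Fin (b+c) => (if j ∈ σ then (2:ℤ) else 1) = 2)) = σ := by
        ext j
        simp only [Finset.mem_filter, Finset.mem_univ, true_and]
        split <;> simp_all
      rw [h1, hσ.2]
      norm_num
    rcases eq_or_ne x 1 with rfl | hx1
    · have h1 : (Finset.univ.filter (fun j : Fin (b+c) => (if j ∈ σ then (2:ℤ) else 1) = 1)) = σᶜ := by
        ext j
        simp only [Finset.mem_filter, Finset.mem_univ, true_and, Finset.mem_compl]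
        split <;> simp_all
      rw [h1, Finset.card_compl, hσ.2]
      simp only [Fintype.card_fin]
      norm_num
    · have h1 : (Finset.univ.filter (fun j : Fin (b+c) => (if j ∈ σ then (2:ℤ) else 1) = x)) = ∅ := by
        ext j
        simp only [Finset.mem_filter, Finset.mem_univ, true_and, Finset.notMem_empty, iff_false]
        split
        · exact fun h => hx2 h.symm
        · exact fun h => hx1 h.symm
      rw [h1]
      rw [if_neg (by simpa using fun h : (2:ℤ) = x => hx2 h.symm),
        if_neg (by simpa using fun h : (1:ℤ) = x => hx1 h.symm)]
      simp
  · exact hli σ hσ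
  · -- right inverse
    rw [Finset.mem_powersetCard] at hσ
    ext j
    simp only [Finset.mem_filter, Finset.mem_univ, true_and]
    simp only [sigA]
    have hj : (j:ℕ) < (List.ofFn (fun j : Fin (b+c) => if j ∈ σ then (2:ℤ) else 1)).length := by
      simp [List.length_ofFn]
    rw [List.getD_eq_getElem _ 0 hj, List.getElem_ofFn]
    constructor
    · intro h
      by_contra hc
      rw [if_neg (by simpa using hc)] at h
      norm_num at h
    · intro h
      rw [if_pos (by simpa using h)]
  · exact (congrArg (qhs n) (hli σ hσ)).symm

lemma qhs_sigA {n b c : ℕ} (A : Finset (Fin (b+c))) :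
    qhs n (sigA A) = ∑ t ∈ ((Finset.Icc 1 (n-1)).powersetCard (b+c)).attach,
      (∏ j ∈ A, vv n (t.1.orderEmbOfFin (Finset.mem_powersetCard.mp t.2).2 j) 2) *
      ∏ j ∈ Aᶜ, vv n (t.1.orderEmbOfFin (Finset.mem_powersetCard.mp t.2).2 j) 1 := by
  rw [qhs]
  have hlen : (sigA A).length = b + c := by simp [sigA]
  rw [show ((Finset.Icc 1 (n-1)).powersetCard (sigA A).length)
      = ((Finset.Icc 1 (n-1)).powersetCard (b+c)) by rw [hlen]]
  rw [← Finset.sum_attach]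
  refine Finset.sum_congr rfl fun t _ => ?_
  have ht2 : #t.1 = b + c := (Finset.mem_powersetCard.mp t.2).2
  rw [sort_eq_ofFn ht2, sigA,
    show (fun (i:ℕ) (e:ℤ) => ((1:ℂ) - zetaN n ^ i) ^ (-e)) = vv n from rfl,
    prod_zipWith_ofFn (vv n)]
  rw [← Finset.prod_mul_prod_compl A]
  congr 1
  · exact Finset.prod_congr rfl fun j hj => by rw [if_pos hj]
  · exact Finset.prod_congr rfl fun j hj => by rw [if_neg (Finset.mem_compl.mp hj)]

lemma image_compl_orderEmb {N : ℕ} {t : Finset ℕ} (ht : #t = N) (A : Finset (Fin N)) :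
    Finset.image (fun j => t.orderEmbOfFin ht j) Aᶜ
      = t \ Finset.image (fun j => t.orderEmbOfFin ht j) A := by
  set e := fun j => t.orderEmbOfFin ht j with he
  have hinj : Function.Injective e := (t.orderEmbOfFin ht).injective
  ext i
  simp only [Finset.mem_image, Finset.mem_sdiff, Finset.mem_compl]
  constructor
  · rintro ⟨j, hj, rfl⟩
    refine ⟨Finset.orderEmbOfFin_mem t ht j, ?_⟩
    rintro ⟨j', hj', hee⟩
    exact hj (hinj hee ▸ hj')
  · rintro ⟨hit, hni⟩
    have : i ∈ Set.range e := by rw [he]; rw [Finset.range_orderEmbOfFin]; exact hit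
    obtain ⟨j, rfl⟩ := this
    exact ⟨j, fun hj => hni ⟨j, hj, rfl⟩, rfl⟩

lemma pcd_eq_image {N b : ℕ} {t : Finset ℕ} (ht : #t = N) :
    t.powersetCard b
      = (Finset.univ.powersetCard b : Finset (Finset (Fin N))).image
          (fun A => A.image (fun j => t.orderEmbOfFin ht j)) := by
  set e := fun j => t.orderEmbOfFin ht j with he
  have hinj : Function.Injective e := (t.orderEmbOfFin ht).injective
  ext A'
  simp only [Finset.mem_image, Finset.mem_powersetCard]
  constructor
  · rintro ⟨hsub, hcard⟩
    refine ⟨Finset.univ.filter (fun j => e j ∈ A'), ⟨Finset.subset_univ _, ?_⟩, ?_⟩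
    · -- card
      have himg : Finset.image e (Finset.univ.filter (fun j => e j ∈ A')) = A' := by
        ext i
        simp only [Finset.mem_image, Finset.mem_filter, Finset.mem_univ, true_and]
        constructor
        · rintro ⟨j, hj, rfl⟩; exact hj
        · intro hi
          have : i ∈ Set.range e := by rw [he]; rw [Finset.range_orderEmbOfFin]; exact hsub hi
          obtain ⟨j, rfl⟩ := this
          exact ⟨j, hi, rfl⟩
      have hci := Finset.card_image_of_injective (Finset.univ.filter (fun j => e j ∈ A')) hinj
      rw [himg] at hci
      rw [← hci, hcard]
    · ext i
      simp only [Finset.mem_image, Finset.mem_filter, Finset.mem_univ, true_and]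
      constructor
      · rintro ⟨j, hj, rfl⟩; exact hj
      · intro hi
        have : i ∈ Set.range e := by rw [he]; rw [Finset.range_orderEmbOfFin]; exact hsub hi
        obtain ⟨j, rfl⟩ := this
        exact ⟨j, hi, rfl⟩
  · rintro ⟨A, ⟨-, hcard⟩, rfl⟩
    constructor
    · intro i hi
      simp only [Finset.mem_image] at hi
      obtain ⟨j, hj, rfl⟩ := hi
      exact Finset.orderEmbOfFin_mem t ht j
    · rw [Finset.card_image_of_injective _ hinj, hcard]

lemma YpermD {n : ℕ} (b c : ℕ) :
    Yperm n (List.replicate b (2:ℤ) ++ List.replicate c 1)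
      = ∑ A ∈ (Finset.Icc 1 (n-1)).powersetCard b,
          ∑ B ∈ ((Finset.Icc 1 (n-1)) \ A).powersetCard c,
            (∏ i ∈ A, vv n i 2) * ∏ i ∈ B, vv n i 1 := by
  rw [permA, Finset.sum_congr rfl (fun A _ => qhs_sigA A), Finset.sum_comm]
  have step2 : ∀ t ∈ ((Finset.Icc 1 (n-1)).powersetCard (b+c)).attach,
      (∑ A ∈ (Finset.univ : Finset (Fin (b+c))).powersetCard b,
        (∏ j ∈ A, vv n (t.1.orderEmbOfFin (Finset.mem_powersetCard.mp t.2).2 j) 2) *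
        ∏ j ∈ Aᶜ, vv n (t.1.orderEmbOfFin (Finset.mem_powersetCard.mp t.2).2 j) 1)
      = ∑ A' ∈ t.1.powersetCard b,
          (∏ i ∈ A', vv n i 2) * ∏ i ∈ t.1 \ A', vv n i 1 := by
    intro t _
    have ht2 : #t.1 = b + c := (Finset.mem_powersetCard.mp t.2).2
    have hinj : Function.Injective (fun j => t.1.orderEmbOfFin ht2 j) :=
      (t.1.orderEmbOfFin ht2).injective
    rw [pcd_eq_image ht2,
      Finset.sum_image (fun x _ y _ h => Finset.image_injective hinj h)]
    refine Finset.sum_congr rfl fun A _ => ?_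
    rw [← image_compl_orderEmb ht2 A, Finset.prod_image, Finset.prod_image]
    · exact fun x _ y _ h => hinj h
    · exact fun x _ y _ h => hinj h
  rw [Finset.sum_congr rfl step2, Finset.sum_attach _
    (fun t => ∑ A' ∈ t.powersetCard b, (∏ i ∈ A', vv n i 2) * ∏ i ∈ t \ A', vv n i 1)]
  -- step 3: sigma bijection
  rw [Finset.sum_sigma', Finset.sum_sigma']
  refine Finset.sum_nbij' (i := fun x => ⟨x.2, x.1 \ x.2⟩) (j := fun x => ⟨x.1 ∪ x.2, x.1⟩)
    ?_ ?_ ?_ ?_ ?_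
  · rintro ⟨t, A⟩ hx
    simp only [Finset.mem_sigma, Finset.mem_powersetCard] at hx ⊢
    obtain ⟨⟨htS, htc⟩, ⟨hAt, hAc⟩⟩ := hx
    refine ⟨⟨hAt.trans htS, hAc⟩, ?_, ?_⟩
    · intro i hi
      simp only [Finset.mem_sdiff] at hi ⊢
      exact ⟨htS hi.1, hi.2⟩
    · rw [Finset.card_sdiff_of_subset hAt, htc, hAc]
      omega
  · rintro ⟨A, B⟩ hx
    simp only [Finset.mem_sigma, Finset.mem_powersetCard] at hx ⊢
    obtain ⟨⟨hAS, hAc⟩, ⟨hBS, hBc⟩⟩ := hx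
    have hdisj : Disjoint A B := Finset.disjoint_left.mpr
      (fun i hiA hiB => (Finset.mem_sdiff.mp (hBS hiB)).2 hiA)
    refine ⟨⟨?_, ?_⟩, Finset.subset_union_left, hAc⟩
    · intro i hi
      rcases Finset.mem_union.mp hi with h | h
      · exact hAS h
      · exact (Finset.mem_sdiff.mp (hBS h)).1
    · rw [Finset.card_union_of_disjoint hdisj, hAc, hBc]
  · rintro ⟨t, A⟩ hx
    simp only [Finset.mem_sigma, Finset.mem_powersetCard] at hx
    have h : A ∪ t \ A = t := Finset.union_sdiff_of_subset hx.2.1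
    show (⟨A ∪ t \ A, A⟩ : (_ : Finset ℕ) × Finset ℕ) = ⟨t, A⟩
    rw [h]
  · rintro ⟨A, B⟩ hx
    simp only [Finset.mem_sigma, Finset.mem_powersetCard] at hx
    have hdisj : Disjoint A B := Finset.disjoint_left.mpr
      (fun i hiA hiB => (Finset.mem_sdiff.mp (hx.2.1 hiB)).2 hiA)
    have h : (A ∪ B) \ A = B := Finset.union_sdiff_cancel_left hdisj
    show (⟨A, (A ∪ B) \ A⟩ : (_ : Finset ℕ) × Finset ℕ) = ⟨A, B⟩
    rw [h]
  · rintro ⟨t, A⟩ _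
    rfl

lemma prod_inter_sdiff {β : Type*} [CommRing β] (u : ℕ → β) (T1 T2 : Finset ℕ) :
    ∏ i ∈ T1, u i = (∏ i ∈ T1 ∩ T2, u i) * ∏ i ∈ T1 \ T2, u i := by
  rw [← Finset.prod_union (Finset.disjoint_left.mpr
    (fun x h1 h2 => (Finset.mem_sdiff.mp h2).2 (Finset.mem_inter.mp h1).2))]
  congr 1
  ext x
  simp only [Finset.mem_union, Finset.mem_inter, Finset.mem_sdiff]
  tauto

lemma key2 {β : Type*} [CommRing β] (S : Finset ℕ) (u : ℕ → β) (m ℓ : ℕ) (hml : ℓ ≤ m) :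
    (∑ T ∈ S.powersetCard m, ∏ i ∈ T, u i) * (∑ T ∈ S.powersetCard ℓ, ∏ i ∈ T, u i)
      = ∑ k ∈ Finset.range (ℓ+1), ((m+ℓ-2*k).choose (m-k) : β) *
          ∑ A ∈ S.powersetCard k, ∑ B ∈ (S \ A).powersetCard (m+ℓ-2*k),
            (∏ i ∈ A, u i ^ 2) * ∏ i ∈ B, u i := by
  -- Rewrite the RHS as a four-fold sum by seeing the binomial coefficient
  -- as the number of subsets C ⊆ B of size m - k.
  have hR : ∀ k ∈ Finset.range (ℓ+1),
      ((m+ℓ-2*k).choose (m-k) : β) *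
        (∑ A ∈ S.powersetCard k, ∑ B ∈ (S \ A).powersetCard (m+ℓ-2*k),
          (∏ i ∈ A, u i ^ 2) * ∏ i ∈ B, u i)
      = ∑ A ∈ S.powersetCard k, ∑ B ∈ (S \ A).powersetCard (m+ℓ-2*k),
          ∑ C ∈ B.powersetCard (m-k), (∏ i ∈ A, u i ^ 2) * ∏ i ∈ B, u i := by
    intro k _
    rw [Finset.mul_sum]
    refine Finset.sum_congr rfl fun A _ => ?_
    rw [Finset.mul_sum]
    refine Finset.sum_congr rfl fun B hB => ?_
    have hcB : #B = m+ℓ-2*k := (Finset.mem_powersetCard.mp hB).2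
    rw [Finset.sum_const, Finset.card_powersetCard, hcB, nsmul_eq_mul]
  rw [Finset.sum_congr rfl hR, Finset.sum_mul_sum, ← Finset.sum_product']
  -- sigma-ify the RHS
  have hsig : ∑ k ∈ Finset.range (ℓ+1), ∑ A ∈ S.powersetCard k,
        ∑ B ∈ (S \ A).powersetCard (m+ℓ-2*k), ∑ C ∈ B.powersetCard (m-k),
          (∏ i ∈ A, u i ^ 2) * ∏ i ∈ B, u i
      = ∑ x ∈ (Finset.range (ℓ+1)).sigma (fun k => (S.powersetCard k).sigma
            (fun A => ((S \ A).powersetCard (m+ℓ-2*k)).sigma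
              (fun B => B.powersetCard (m-k)))),
          (∏ i ∈ x.2.1, u i ^ 2) * ∏ i ∈ x.2.2.1, u i := by
    rw [Finset.sum_sigma]
    refine Finset.sum_congr rfl fun k _ => ?_
    rw [Finset.sum_sigma]
    refine Finset.sum_congr rfl fun A _ => ?_
    rw [Finset.sum_sigma]
  rw [hsig]
  -- the bijection
  refine Finset.sum_nbij'
    (i := fun x => ⟨#(x.1 ∩ x.2), x.1 ∩ x.2, (x.1 ∪ x.2) \ (x.1 ∩ x.2), x.1 \ x.2⟩)
    (j := fun y => (y.2.1 ∪ y.2.2.2, y.2.1 ∪ (y.2.2.1 \ y.2.2.2))) ?_ ?_ ?_ ?_ ?_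
  · rintro ⟨T1, T2⟩ hx
    rw [Finset.mem_product] at hx
    obtain ⟨h1, h2⟩ := hx
    dsimp only at h1 h2
    rw [Finset.mem_powersetCard] at h1 h2
    obtain ⟨hT1S, hT1c⟩ := h1
    obtain ⟨hT2S, hT2c⟩ := h2
    have hky : #(T1 ∩ T2) ≤ ℓ := by
      rw [← hT2c]; exact Finset.card_le_card Finset.inter_subset_right
    have hcu : #(T1 ∪ T2) + #(T1 ∩ T2) = m + ℓ := by
      rw [Finset.card_union_add_card_inter, hT1c, hT2c]
    have hsub : T1 ∩ T2 ⊆ T1 ∪ T2 :=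
      Finset.inter_subset_left.trans Finset.subset_union_left
    simp only [Finset.mem_sigma, Finset.mem_range, Finset.mem_powersetCard]
    refine ⟨Nat.lt_succ_of_le hky, ⟨Finset.inter_subset_left.trans hT1S, trivial⟩, ⟨?_, ?_⟩, ?_, ?_⟩
    · intro x hxB
      rw [Finset.mem_sdiff] at hxB ⊢
      refine ⟨?_, hxB.2⟩
      rcases Finset.mem_union.mp hxB.1 with h | h
      · exact hT1S h
      · exact hT2S h
    · rw [Finset.card_sdiff_of_subset hsub]
      omega
    · intro x hxC
      rw [Finset.mem_sdiff] at hxC ⊢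
      rw [Finset.mem_union, Finset.mem_inter]
      tauto
    · have h5 : #(T1 \ T2) + #(T1 ∩ T2) = #T1 := Finset.card_sdiff_add_card_inter T1 T2
      omega
  · rintro ⟨k, A, B, C⟩ hy
    simp only [Finset.mem_sigma, Finset.mem_range, Finset.mem_powersetCard] at hy
    obtain ⟨hk, ⟨hAS, hAc⟩, ⟨hBS, hBc⟩, hCB, hCc⟩ := hy
    have hAB : Disjoint A B := Finset.disjoint_left.mpr
      (fun x hxA hxB => (Finset.mem_sdiff.mp (hBS hxB)).2 hxA)
    have hAC : Disjoint A C := hAB.mono_right hCB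
    have hABC : Disjoint A (B \ C) := hAB.mono_right (Finset.sdiff_subset)
    rw [Finset.mem_product, Finset.mem_powersetCard, Finset.mem_powersetCard]
    have hBSS : B ⊆ S := hBS.trans (Finset.sdiff_subset)
    refine ⟨⟨Finset.union_subset hAS (hCB.trans hBSS |>.trans ?_), ?_⟩,
      ⟨Finset.union_subset hAS ((Finset.sdiff_subset).trans hBSS), ?_⟩⟩
    · exact fun _ a => a
    · rw [Finset.card_union_of_disjoint hAC, hAc, hCc]; omega
    · rw [Finset.card_union_of_disjoint hABC, hAc, Finset.card_sdiff_of_subset hCB, hBc, hCc]; omega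
  · rintro ⟨T1, T2⟩ hx
    have e1 : (T1 ∩ T2) ∪ (T1 \ T2) = T1 := by
      ext x; simp only [Finset.mem_union, Finset.mem_inter, Finset.mem_sdiff]; tauto
    have e2 : (T1 ∩ T2) ∪ (((T1 ∪ T2) \ (T1 ∩ T2)) \ (T1 \ T2)) = T2 := by
      ext x
      simp only [Finset.mem_union, Finset.mem_inter, Finset.mem_sdiff]
      tauto
    show ((T1 ∩ T2) ∪ (T1 \ T2), (T1 ∩ T2) ∪ (((T1 ∪ T2) \ (T1 ∩ T2)) \ (T1 \ T2))) = (T1, T2)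
    rw [e1, e2]
  · rintro ⟨k, A, B, C⟩ hy
    simp only [Finset.mem_sigma, Finset.mem_range, Finset.mem_powersetCard] at hy
    obtain ⟨hk, ⟨hAS, hAc⟩, ⟨hBS, hBc⟩, hCB, hCc⟩ := hy
    have hAB : ∀ x ∈ A, x ∉ B := fun x hxA hxB => (Finset.mem_sdiff.mp (hBS hxB)).2 hxA
    have hCB' : ∀ x ∈ C, x ∈ B := fun x hx => hCB hx
    set T1 := A ∪ C
    set T2 := A ∪ (B \ C)
    have e1 : T1 ∩ T2 = A := by
      ext x
      simp only [T1, T2, Finset.mem_inter, Finset.mem_union, Finset.mem_sdiff]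
      constructor
      · rintro ⟨h1 | h1, h2 | h2⟩ <;> first | exact h1 | exact h2 | tauto
      · intro h; tauto
    have e2 : (T1 ∪ T2) \ (T1 ∩ T2) = B := by
      rw [e1]
      ext x
      simp only [T1, T2, Finset.mem_sdiff, Finset.mem_union, Finset.mem_sdiff]
      constructor
      · rintro ⟨h1, h2⟩
        rcases h1 with (h|h)|(h|h) <;> first | exact absurd h h2 | exact hCB' _ h | exact h.1
      · intro hxB
        refine ⟨?_, fun hxA => hAB x hxA hxB⟩
        by_cases hxC : x ∈ C
        · exact Or.inl (Or.inr hxC)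
        · exact Or.inr (Or.inr ⟨hxB, hxC⟩)
    have e3 : T1 \ T2 = C := by
      ext x
      simp only [T1, T2, Finset.mem_sdiff, Finset.mem_union, Finset.mem_sdiff]
      constructor
      · rintro ⟨h1 | h1, h2⟩ <;> tauto
      · intro hxC
        have hxB := hCB' x hxC
        refine ⟨Or.inr hxC, ?_⟩
        intro hcon
        rcases hcon with h | h
        · exact hAB x h hxB
        · exact h.2 hxC
    show (⟨#(T1 ∩ T2), T1 ∩ T2, (T1 ∪ T2) \ (T1 ∩ T2), T1 \ T2⟩ :
        Σ _ : ℕ, Σ _ : Finset ℕ, Σ _ : Finset ℕ, Finset ℕ) = ⟨k, A, B, C⟩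
    rw [e2, e3, e1, hAc]
  · rintro ⟨T1, T2⟩ hx
    have e1 : ∏ i ∈ T1, u i = (∏ i ∈ T1 ∩ T2, u i) * ∏ i ∈ T1 \ T2, u i :=
      prod_inter_sdiff u T1 T2
    have e2 : ∏ i ∈ T2, u i = (∏ i ∈ T1 ∩ T2, u i) * ∏ i ∈ T2 \ T1, u i := by
      rw [Finset.inter_comm]; exact prod_inter_sdiff u T2 T1
    have e3 : (T1 ∪ T2) \ (T1 ∩ T2) = (T1 \ T2) ∪ (T2 \ T1) := by
      ext x
      simp only [Finset.mem_sdiff, Finset.mem_union, Finset.mem_inter]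
      tauto
    have e4 : Disjoint (T1 \ T2) (T2 \ T1) := Finset.disjoint_left.mpr
      (fun x h1 h2 => (Finset.mem_sdiff.mp h2).2 (Finset.mem_sdiff.mp h1).1)
    show (∏ i ∈ T1, u i) * ∏ i ∈ T2, u i
      = (∏ i ∈ T1 ∩ T2, u i ^ 2) * ∏ i ∈ (T1 ∪ T2) \ (T1 ∩ T2), u i
    rw [e1, e2, e3, Finset.prod_union e4, Finset.prod_pow]
    ring

lemma vv_one {n i : ℕ} : vv n i 1 = uu n i := by
  rw [vv, uu, zpow_neg, zpow_one]

lemma vv_two {n i : ℕ} : vv n i 2 = uu n i ^ 2 := by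
  rw [vv, uu, inv_pow, ← zpow_natCast (1 - zetaN n ^ i) 2, ← zpow_neg]
  norm_num

lemma YpermD2 {n : ℕ} (b c : ℕ) :
    Yperm n (List.replicate b (2:ℤ) ++ List.replicate c 1)
      = ∑ A ∈ (Finset.Icc 1 (n-1)).powersetCard b,
          ∑ B ∈ ((Finset.Icc 1 (n-1)) \ A).powersetCard c,
            (∏ i ∈ A, uu n i ^ 2) * ∏ i ∈ B, uu n i := by
  rw [YpermD]
  refine Finset.sum_congr rfl fun A _ => Finset.sum_congr rfl fun B _ => ?_
  congr 1
  · exact Finset.prod_congr rfl fun i _ => vv_two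
  · exact Finset.prod_congr rfl fun i _ => vv_one

lemma Dzero {n m ℓ : ℕ} (hn : 2 ≤ n) (hml : ℓ ≤ m) (j : ℕ) (hj1 : j ≤ ℓ) (hj2 : n - m ≤ j) :
    ∑ A ∈ (Finset.Icc 1 (n-1)).powersetCard (ℓ-j),
      ∑ B ∈ ((Finset.Icc 1 (n-1)) \ A).powersetCard (m-ℓ+2*j),
        (∏ i ∈ A, uu n i ^ 2) * ∏ i ∈ B, uu n i = 0 := by
  have hSc : #(Finset.Icc 1 (n-1)) = n - 1 := by rw [Nat.card_Icc]; omega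
  rcases le_or_gt (ℓ-j) (n-1) with hcase | hcase
  · refine Finset.sum_eq_zero fun A hA => ?_
    obtain ⟨hAS, hAc⟩ := Finset.mem_powersetCard.mp hA
    have hcs : #((Finset.Icc 1 (n-1)) \ A) = (n-1) - (ℓ-j) := by
      rw [Finset.card_sdiff_of_subset hAS, hSc, hAc]
    rw [Finset.powersetCard_eq_empty.mpr (by omega), Finset.sum_empty]
  · rw [Finset.powersetCard_eq_empty.mpr (by omega), Finset.sum_empty]

theorem stmt10 (n m ℓ : ℕ) (hn : 2 ≤ n) (hℓ : 1 ≤ ℓ) (hml : ℓ ≤ m) :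
    ∑ j ∈ Finset.range (n - m),
        ((m - ℓ + 2 * j).choose j : ℂ) * Y3 n 0 ((ℓ : ℤ) - j) ((m : ℤ) - ℓ + 2 * j)
      = 1 / (((m : ℂ) + 1) * ((ℓ : ℂ) + 1)) * ((n - 1).choose m : ℂ) * ((n - 1).choose ℓ : ℂ) := by
  classical
  -- the double-subset sum
  set D : ℕ → ℕ → ℂ := fun b c =>
    ∑ A ∈ (Finset.Icc 1 (n-1)).powersetCard b,
      ∑ B ∈ ((Finset.Icc 1 (n-1)) \ A).powersetCard c,
        (∏ i ∈ A, uu n i ^ 2) * ∏ i ∈ B, uu n i with hDdef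
  have hY : ∀ j : ℕ, j ≤ ℓ → Y3 n 0 ((ℓ : ℤ) - j) ((m : ℤ) - ℓ + 2 * j)
      = D (ℓ-j) (m-ℓ+2*j) := by
    intro j hj
    rw [Y3, if_pos ⟨le_refl 0, by omega, by omega⟩]
    rw [show ((0:ℤ)).toNat = 0 from rfl,
      show (((ℓ:ℤ) - j)).toNat = ℓ - j by omega,
      show (((m:ℤ) - ℓ + 2 * j)).toNat = m - ℓ + 2*j by omega]
    rw [List.replicate_zero, List.nil_append]
    exact YpermD2 (ℓ-j) (m-ℓ+2*j)
  have hY0 : ∀ j : ℕ, ℓ < j → Y3 n 0 ((ℓ : ℤ) - j) ((m : ℤ) - ℓ + 2 * j) = 0 := by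
    intro j hj
    rw [Y3, if_neg]
    intro h
    have := h.2.1
    omega
  set K := min (n - m) (ℓ + 1) with hK
  have step1 : ∑ j ∈ Finset.range (n - m),
        ((m - ℓ + 2 * j).choose j : ℂ) * Y3 n 0 ((ℓ : ℤ) - j) ((m : ℤ) - ℓ + 2 * j)
      = ∑ j ∈ Finset.range K, ((m - ℓ + 2 * j).choose j : ℂ) * D (ℓ-j) (m-ℓ+2*j) := by
    rw [← Finset.sum_subset (Finset.range_subset_range.mpr (by omega : K ≤ n - m))]
    · refine Finset.sum_congr rfl fun j hj => ?_
      rw [hY j (by simp only [Finset.mem_range] at hj; omega)]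
    · intro j hj hj2
      simp only [Finset.mem_range] at hj hj2
      rw [hY0 j (by omega), mul_zero]
  have step2 : ∑ j ∈ Finset.range K, ((m - ℓ + 2 * j).choose j : ℂ) * D (ℓ-j) (m-ℓ+2*j)
      = ∑ j ∈ Finset.range (ℓ+1), ((m - ℓ + 2 * j).choose j : ℂ) * D (ℓ-j) (m-ℓ+2*j) := by
    refine Finset.sum_subset (Finset.range_subset_range.mpr (by omega : K ≤ ℓ + 1)) ?_
    intro j hj hj2
    simp only [Finset.mem_range] at hj hj2
    simp only [hDdef]
    rw [Dzero hn hml j (by omega) (by omega), mul_zero]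
  have step3 : ∑ j ∈ Finset.range (ℓ+1), ((m - ℓ + 2 * j).choose j : ℂ) * D (ℓ-j) (m-ℓ+2*j)
      = ∑ k ∈ Finset.range (ℓ+1), ((m+ℓ-2*k).choose (m-k) : ℂ) * D k (m+ℓ-2*k) := by
    rw [← Finset.sum_range_reflect (fun k => ((m+ℓ-2*k).choose (m-k) : ℂ) * D k (m+ℓ-2*k)) (ℓ+1)]
    refine Finset.sum_congr rfl fun j hj => ?_
    simp only [Finset.mem_range] at hj
    rw [show ℓ + 1 - 1 - j = ℓ - j by omega,
      show m + ℓ - 2 * (ℓ - j) = m - ℓ + 2*j by omega,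
      show m - (ℓ - j) = m - ℓ + j by omega,
      show (m - ℓ + 2*j).choose (m - ℓ + j) = (m - ℓ + 2 * j).choose j by
        rw [← Nat.choose_symm (by omega : m - ℓ + j ≤ m - ℓ + 2*j),
          show m - ℓ + 2*j - (m - ℓ + j) = j by omega]]
  have hkey := key2 (Finset.Icc 1 (n-1)) (uu n) m ℓ hml
  have hem := esymm_uu hn m
  have hel := esymm_uu hn ℓ
  rw [step1, step2, step3, ← hkey, hem, hel]
  -- closed-form arithmetic
  have hne : (n:ℂ) ≠ 0 := Nat.cast_ne_zero.mpr (by omega)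
  have hm1 : ((m:ℂ) + 1) ≠ 0 := Nat.cast_add_one_ne_zero m
  have hl1 : ((ℓ:ℂ) + 1) ≠ 0 := Nat.cast_add_one_ne_zero ℓ
  have h1 : (n:ℂ) * ((n-1).choose m : ℂ) = (n.choose (m+1) : ℂ) * ((m:ℂ)+1) := by
    have := Nat.add_one_mul_choose_eq (n-1) m
    rw [show n - 1 + 1 = n by omega] at this
    exact_mod_cast this
  have h2 : (n:ℂ) * ((n-1).choose ℓ : ℂ) = (n.choose (ℓ+1) : ℂ) * ((ℓ:ℂ)+1) := by
    have := Nat.add_one_mul_choose_eq (n-1) ℓ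
    rw [show n - 1 + 1 = n by omega] at this
    exact_mod_cast this
  have e1 : (n.choose (m+1) : ℂ) / n = ((n-1).choose m : ℂ) / ((m:ℂ)+1) := by
    rw [div_eq_div_iff hne hm1]
    linear_combination -h1
  have e2 : (n.choose (ℓ+1) : ℂ) / n = ((n-1).choose ℓ : ℂ) / ((ℓ:ℂ)+1) := by
    rw [div_eq_div_iff hne hl1]
    linear_combination -h2
  rw [e1, e2]
  field_simp
end
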